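/- arXiv:1302.2415 — 9 statements merged into one kernel-verified Lean document; each statement's English description precedes it below -/
import Mathlib

section
/- Every vertex of the upper image P = P[S] + C is a C-minimal point of P, where C is a nontrivial convex pointed cone. -/
/-! If `y` is a vertex of `𝒫` and `y - k ∈ 𝒫` with `k ∈ C`, then also `y + k ∈ 𝒫`, because
`𝒫 + C ⊆ 𝒫`. As `y` is the midpoint of `y - k` and `y + k`, being a vertex forces `k = 0`. -/

section Convex

variable {𝕜 E : Type*} [Field 𝕜] [LinearOrder 𝕜] [IsStrictOrderedRing 𝕜]
  [AddCommGroup E] [Module 𝕜 E]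

theorem Convex.add_mem_of_smul_mem {C : Set E} (hconv : Convex 𝕜 C)
    (hsmul : ∀ t : 𝕜, 0 < t → ∀ x ∈ C, t • x ∈ C) {u v : E} (hu : u ∈ C) (hv : v ∈ C) :
    u + v ∈ C := by
  have hmid : (2⁻¹ : 𝕜) • u + (2⁻¹ : 𝕜) • v ∈ C :=
    hconv hu hv (by norm_num) (by norm_num) (by norm_num)
  convert hsmul 2 two_pos _ hmid using 1
  module

theorem mem_extremePoints_of_forall_smul_add_smul {A : Set E} {x : E} (hx : x ∈ A)
    (h : ∀ a ∈ A, ∀ b ∈ A, ∀ t : 𝕜, 0 < t → t < 1 → x = t • a + (1 - t) • b → a = x ∧ b = x) :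
    x ∈ A.extremePoints 𝕜 := by
  refine mem_extremePoints.mpr ⟨hx, fun a ha b hb ⟨s, t, hs, ht, hst, hxab⟩ => ?_⟩
  obtain rfl : t = 1 - s := eq_sub_of_add_eq' hst
  exact h a ha b hb s hs (by linarith) hxab.symm

theorem eq_zero_of_sub_mem_of_add_mem_of_mem_extremePoints {A : Set E} {x k : E}
    (hx : x ∈ A.extremePoints 𝕜) (hsub : x - k ∈ A) (hadd : x + k ∈ A) : k = 0 := by
  have hmid : x ∈ openSegment 𝕜 (x - k) (x + k) :=
    ⟨2⁻¹, 2⁻¹, by norm_num, by norm_num, by norm_num, by module⟩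
  exact sub_eq_self.mp ((mem_extremePoints.mp hx).2 _ hsub _ hadd hmid).1

end Convex

def upperImage {α E : Type*} [Add E] (f : α → E) (S : Set α) (C : Set E) : Set E :=
  {y | ∃ x ∈ S, ∃ c ∈ C, y = f x + c}

theorem add_mem_upperImage {α E : Type*} [AddSemigroup E] {f : α → E} {S : Set α} {C : Set E}
    (hC : ∀ u ∈ C, ∀ v ∈ C, u + v ∈ C) {y k : E} (hy : y ∈ upperImage f S C) (hk : k ∈ C) :
    y + k ∈ upperImage f S C := by
  obtain ⟨x, hx, c, hc, rfl⟩ := hy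
  exact ⟨x, hx, c + k, hC c hc k hk, add_assoc _ _ _⟩

theorem vertex_is_C_minimal_general
    (q n : ℕ) (P : Matrix (Fin q) (Fin n) ℝ) (S : Set (Fin n → ℝ))
    (C : Set (Fin q → ℝ))
    (hCconv : Convex ℝ C)
    (hCcone : ∀ t : ℝ, 0 ≤ t → ∀ x ∈ C, t • x ∈ C)
    (Pup : Set (Fin q → ℝ))
    (hPup : Pup = {y | ∃ x ∈ S, ∃ k ∈ C, y = P.mulVec x + k})
    (y : Fin q → ℝ) (hy : y ∈ Pup)
    (hvertex : ∀ a ∈ Pup, ∀ b ∈ Pup, ∀ lam : ℝ, 0 < lam → lam < 1 →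
      y = lam • a + (1 - lam) • b → a = y ∧ b = y) :
    ¬ ∃ k ∈ C, k ≠ 0 ∧ y - k ∈ Pup := by
  rintro ⟨k, hkC, hk0, hsub⟩
  have hCadd : ∀ u ∈ C, ∀ v ∈ C, u + v ∈ C := fun u hu v hv =>
    hCconv.add_mem_of_smul_mem (fun t ht => hCcone t ht.le) hu hv
  have hadd : y + k ∈ Pup := by
    subst hPup
    exact add_mem_upperImage (f := P.mulVec) hCadd hy hkC
  exact hk0 (eq_zero_of_sub_mem_of_add_mem_of_mem_extremePoints
    (mem_extremePoints_of_forall_smul_add_smul hy hvertex) hsub hadd)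

/-- Every vertex of the upper image 𝒫 = P[S] + C is a C-minimal point of 𝒫,
where C is a nontrivial convex pointed cone. -/
theorem vertex_is_C_minimal
    (q n : ℕ) (P : Matrix (Fin q) (Fin n) ℝ) (S : Set (Fin n → ℝ)) (hS : S.Nonempty)
    (C : Set (Fin q → ℝ))
    (hCconv : Convex ℝ C)
    (hCcone : ∀ t : ℝ, 0 ≤ t → ∀ x ∈ C, t • x ∈ C)
    (hCpointed : ∀ x ∈ C, -x ∈ C → x = 0)
    (hCne0 : C ≠ {0}) (hCneuniv : C ≠ Set.univ)
    (Pup : Set (Fin q → ℝ))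
    (hPup : Pup = {y | ∃ x ∈ S, ∃ k ∈ C, y = P.mulVec x + k})
    (y : Fin q → ℝ) (hy : y ∈ Pup)
    (hvertex : ∀ a ∈ Pup, ∀ b ∈ Pup, ∀ lam : ℝ, 0 < lam → lam < 1 →
      y = lam • a + (1 - lam) • b → a = y ∧ b = y) :
    ¬ ∃ k ∈ C, k ≠ 0 ∧ y - k ∈ Pup :=
  vertex_is_C_minimal_general q n P S C hCconv hCcone Pup hPup y hy hvertex
end

section
/- Let C ⊆ ℝ^q be a solid pointed polyhedral cone, c ∈ int C, S = {x : Bx ≥ b} ≠ ∅, and t ∈ ℝ^q. If (x̄, z̄) is an optimal solution of the program P₂(t): min z s.t. Bx ≥ b, Px ≤_C t + z·c, then: t ∉ 𝒫 iff z̄ > 0; t is weakly C-minimal in 𝒫 iff z̄ = 0; and t ∈ int 𝒫 iff z̄ < 0, where 𝒫 = P[S] + C. -/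
/-!
A pair `(x, z)` is feasible for `P₂(t)` exactly when `t + z • c ∈ 𝒫`, so `z̄` is the least `z`
with `t + z • c ∈ 𝒫`. Since `𝒫 + C ⊆ 𝒫`, `t ∈ 𝒫` iff `t = (t + z̄ • c) + (-z̄) • c` can be
reached by adding an element of `C`, i.e. iff `z̄ ≤ 0`. Since `𝒫 + int C ⊆ int 𝒫` and
`c ∈ int C`, `t` is interior iff some `t - ε • c` with `ε > 0` lies in `𝒫`, i.e. iff `z̄ < 0`.
Weakly minimal points are exactly the points of `𝒫 \ int 𝒫`, hence those with `z̄ = 0`.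
-/

open Matrix Set Topology Pointwise

def IsWeaklyMinimal {E : Type*} [TopologicalSpace E] [Sub E] (C U : Set E) (y : E) : Prop :=
  y ∈ U ∧ ∀ k ∈ interior C, y - k ∉ U

lemma Set.mem_image_add_iff_sub_mem {α F : Type*} [AddCommGroup F] {f : α → F} {S : Set α}
    {K : Set F} {y : F} : y ∈ f '' S + K ↔ ∃ x ∈ S, y - f x ∈ K := by
  constructor
  · rintro ⟨_, ⟨x, hx, rfl⟩, k, hk, rfl⟩
    exact ⟨x, hx, by simpa using hk⟩
  · rintro ⟨x, hx, hk⟩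
    exact ⟨_, ⟨x, hx, rfl⟩, _, hk, add_sub_cancel _ _⟩

lemma PointedCone.add_self_add_subset {R E : Type*} [Semiring R] [PartialOrder R]
    [IsOrderedRing R] [AddCommMonoid E] [Module R E] (C : PointedCone R E) (A : Set E) :
    A + C + C ⊆ A + C := by
  rw [add_assoc]
  exact add_subset_add_left (C.toAddSubmonoid.coe_add_self_eq).subset

lemma PointedCone.coe_map_positive_mulVecLin {q p : ℕ} (Y : Matrix (Fin q) (Fin p) ℝ) :
    ((PointedCone.positive ℝ (Fin p → ℝ)).map Y.mulVecLin : Set (Fin q → ℝ)) =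
      {y | ∃ lam : Fin p → ℝ, 0 ≤ lam ∧ y = Y *ᵥ lam} := by
  ext y
  simp [eq_comm]

section ConeUpperSet

variable {E : Type*} [AddCommGroup E] [Module ℝ E] {C : PointedCone ℝ E} {U : Set E} {c t : E}
  {zbar : ℝ}

lemma mem_iff_nonpos_of_isLeast (hU : U + C ⊆ U) (hc : c ∈ C)
    (hmin : IsLeast {z : ℝ | t + z • c ∈ U} zbar) : t ∈ U ↔ zbar ≤ 0 := by
  refine ⟨fun ht => hmin.2 (by simpa using ht), fun hz => ?_⟩
  have hmem := hU (add_mem_add hmin.1 (C.smul_mem (neg_nonneg.mpr hz) hc))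
  convert hmem using 1
  module

variable [TopologicalSpace E]

lemma PointedCone.smul_mem_interior [ContinuousConstSMul ℝ E] (hc : c ∈ interior (C : Set E))
    {a : ℝ} (ha : 0 < a) : a • c ∈ interior (C : Set E) := by
  have hsub : a • (C : Set E) ⊆ C := by
    rintro _ ⟨x, hx, rfl⟩
    exact C.smul_mem ha.le hx
  apply interior_mono hsub
  rw [interior_smul₀ ha.ne']
  exact smul_mem_smul_set hc

lemma add_interior_subset_interior [ContinuousAdd E] (hU : U + C ⊆ U) :
    U + interior (C : Set E) ⊆ interior U :=
  subset_interior_add_right.trans (interior_mono hU)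

variable [IsTopologicalAddGroup E] [ContinuousSMul ℝ E]

lemma exists_pos_sub_smul_mem_of_mem_nhds {V : Set E} {y : E} (c : E) (hV : V ∈ 𝓝 y) :
    ∃ ε > (0 : ℝ), y - ε • c ∈ V := by
  have hcont : Continuous fun ε : ℝ => y - ε • c := by fun_prop
  have hnear : ∀ᶠ ε in 𝓝[>] (0 : ℝ), y - ε • c ∈ V :=
    nhdsWithin_le_nhds (hcont.tendsto' 0 y (by simp) hV)
  exact (eventually_mem_nhdsWithin.and hnear).exists

lemma isWeaklyMinimal_iff_mem_sdiff_interior (hU : U + C ⊆ U) (hc : c ∈ interior (C : Set E))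
    {y : E} : IsWeaklyMinimal C U y ↔ y ∈ U \ interior U := by
  constructor
  · rintro ⟨hy, hmin⟩
    refine ⟨hy, fun hint => ?_⟩
    obtain ⟨ε, hε, hyε⟩ := exists_pos_sub_smul_mem_of_mem_nhds c (mem_interior_iff_mem_nhds.mp hint)
    exact hmin _ (C.smul_mem_interior hc hε) hyε
  · rintro ⟨hy, hint⟩
    refine ⟨hy, fun k hk hyk => hint ?_⟩
    simpa using add_interior_subset_interior hU (add_mem_add hyk hk)

lemma mem_interior_iff_neg_of_isLeast (hU : U + C ⊆ U) (hc : c ∈ interior (C : Set E))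
    (hmin : IsLeast {z : ℝ | t + z • c ∈ U} zbar) : t ∈ interior U ↔ zbar < 0 := by
  constructor
  · intro ht
    obtain ⟨ε, hε, htε⟩ := exists_pos_sub_smul_mem_of_mem_nhds c (mem_interior_iff_mem_nhds.mp ht)
    have hle : zbar ≤ -ε := hmin.2 (by simpa [sub_eq_add_neg] using htε)
    linarith
  · intro hz
    have hmem := add_interior_subset_interior hU
      (add_mem_add hmin.1 (C.smul_mem_interior hc (neg_pos.mpr hz)))
    convert hmem using 1
    module

lemma isWeaklyMinimal_iff_eq_zero_of_isLeast (hU : U + C ⊆ U) (hc : c ∈ interior (C : Set E))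
    (hmin : IsLeast {z : ℝ | t + z • c ∈ U} zbar) : IsWeaklyMinimal C U t ↔ zbar = 0 := by
  rw [isWeaklyMinimal_iff_mem_sdiff_interior hU hc, Set.mem_sdiff,
    mem_iff_nonpos_of_isLeast hU (interior_subset hc) hmin,
    mem_interior_iff_neg_of_isLeast hU hc hmin, not_lt, ← le_antisymm_iff]

end ConeUpperSet

theorem P2_optimal_value_characterization_general
    (q n m p : ℕ)
    (B : Matrix (Fin m) (Fin n) ℝ) (b : Fin m → ℝ) (P : Matrix (Fin q) (Fin n) ℝ)
    (Y : Matrix (Fin q) (Fin p) ℝ)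
    (C : Set (Fin q → ℝ))
    (hC : C = {y | ∃ lam : Fin p → ℝ, 0 ≤ lam ∧ y = Y.mulVec lam})
    (c : Fin q → ℝ) (hc : c ∈ interior C)
    (S : Set (Fin n → ℝ)) (hS : S = {x | b ≤ B.mulVec x})
    (Pup : Set (Fin q → ℝ))
    (hPup : Pup = {y | ∃ x ∈ S, ∃ k ∈ C, y = P.mulVec x + k})
    (t : Fin q → ℝ) (xbar : Fin n → ℝ) (zbar : ℝ)
    (hfeas : b ≤ B.mulVec xbar ∧ t + zbar • c - P.mulVec xbar ∈ C)
    (hopt : ∀ x : Fin n → ℝ, ∀ z : ℝ,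
      b ≤ B.mulVec x → t + z • c - P.mulVec x ∈ C → zbar ≤ z) :
    (t ∉ Pup ↔ 0 < zbar) ∧
    ((t ∈ Pup ∧ ∀ k ∈ interior C, t - k ∉ Pup) ↔ zbar = 0) ∧
    (t ∈ interior Pup ↔ zbar < 0) := by
  obtain ⟨K, rfl⟩ : ∃ K : PointedCone ℝ (Fin q → ℝ), C = K :=
    ⟨_, hC.trans (PointedCone.coe_map_positive_mulVecLin Y).symm⟩
  subst hS
  have hPup_add : Pup = (P *ᵥ ·) '' {x | b ≤ B *ᵥ x} + K := by
    ext y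
    simp [hPup, mem_image_add_iff_sub_mem, ← sub_eq_iff_eq_add']
  have hUpper : Pup + K ⊆ Pup := hPup_add ▸ K.add_self_add_subset _
  have hmin : IsLeast {z : ℝ | t + z • c ∈ Pup} zbar := by
    simp only [hPup_add, mem_image_add_iff_sub_mem]
    exact ⟨⟨xbar, hfeas⟩, fun z ⟨x, hx, hz⟩ => hopt x z hx hz⟩
  refine ⟨?_, isWeaklyMinimal_iff_eq_zero_of_isLeast hUpper hc hmin,
    mem_interior_iff_neg_of_isLeast hUpper hc hmin⟩
  rw [mem_iff_nonpos_of_isLeast hUpper (interior_subset hc) hmin, not_le]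

/-- Characterization of the position of t relative to 𝒫 = P[S] + C via the sign of the
optimal value z̄ of the translative scalarization P₂(t). -/
theorem P2_optimal_value_characterization
    (q n m p : ℕ)
    (B : Matrix (Fin m) (Fin n) ℝ) (b : Fin m → ℝ) (P : Matrix (Fin q) (Fin n) ℝ)
    (Y : Matrix (Fin q) (Fin p) ℝ)
    (C : Set (Fin q → ℝ))
    (hC : C = {y | ∃ lam : Fin p → ℝ, 0 ≤ lam ∧ y = Y.mulVec lam})
    (hCpointed : ∀ x ∈ C, -x ∈ C → x = 0)
    (c : Fin q → ℝ) (hc : c ∈ interior C)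
    (S : Set (Fin n → ℝ)) (hS : S = {x | b ≤ B.mulVec x}) (hSne : S.Nonempty)
    (Pup : Set (Fin q → ℝ))
    (hPup : Pup = {y | ∃ x ∈ S, ∃ k ∈ C, y = P.mulVec x + k})
    (t : Fin q → ℝ) (xbar : Fin n → ℝ) (zbar : ℝ)
    (hfeas : b ≤ B.mulVec xbar ∧ t + zbar • c - P.mulVec xbar ∈ C)
    (hopt : ∀ x : Fin n → ℝ, ∀ z : ℝ,
      b ≤ B.mulVec x → t + z • c - P.mulVec x ∈ C → zbar ≤ z) :
    (t ∉ Pup ↔ 0 < zbar) ∧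
    ((t ∈ Pup ∧ ∀ k ∈ interior C, t - k ∉ Pup) ↔ zbar = 0) ∧
    (t ∈ interior Pup ↔ zbar < 0) :=
  P2_optimal_value_characterization_general q n m p B b P Y C hC c hc S hS Pup hPup t xbar zbar
    hfeas hopt
end

section
/- Let C ⊆ ℝ^q be a solid pointed polyhedral cone, c ∈ int C, S ≠ ∅, t ∈ ℝ^q, and let (ū, w̄) be an optimal solution of the dual program D₂(t): max b^T u - t^T w s.t. B^T u = P^T w, c^T w = 1, w ∈ C^+, u ≥ 0, with optimal value z̄. Then the hyperplane H = {y ∈ ℝ^q : w̄^T y = b^T ū} is a supporting hyperplane of 𝒫 = P[S] + C (i.e., w̄^T y ≥ b^T ū for all y ∈ 𝒫 and H ∩ 𝒫 ≠ ∅), and the point s = t + z̄·c lies in H ∩ 𝒫. -/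
open Matrix

/-- An optimal solution (ū, w̄) of the dual program D₂(t) defines a supporting hyperplane
H = {y : w̄ᵀy = bᵀū} of 𝒫 = P[S] + C, and the point s = t + z̄·c lies in H ∩ 𝒫. -/
theorem D2_supporting_hyperplane
    (q n m p : ℕ)
    (B : Matrix (Fin m) (Fin n) ℝ) (b : Fin m → ℝ) (P : Matrix (Fin q) (Fin n) ℝ)
    (Y : Matrix (Fin q) (Fin p) ℝ)
    (C : Set (Fin q → ℝ))
    (hC : C = {y | ∃ lam : Fin p → ℝ, 0 ≤ lam ∧ y = Y.mulVec lam})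
    (hCpointed : ∀ x ∈ C, -x ∈ C → x = 0)
    (c : Fin q → ℝ) (hc : c ∈ interior C)
    (S : Set (Fin n → ℝ)) (hS : S = {x | b ≤ B.mulVec x}) (hSne : S.Nonempty)
    (UP : Set (Fin q → ℝ))
    (hUP : UP = {y | ∃ x ∈ S, ∃ k ∈ C, y = P.mulVec x + k})
    (t : Fin q → ℝ) (ubar : Fin m → ℝ) (wbar : Fin q → ℝ) (zbar : ℝ)
    -- (ū, w̄) is feasible for D₂(t)
    (hufeas : 0 ≤ ubar) (hBu : Bᵀ.mulVec ubar = Pᵀ.mulVec wbar)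
    (hcw : c ⬝ᵥ wbar = 1) (hYw : 0 ≤ Yᵀ.mulVec wbar)
    -- (ū, w̄) is optimal for D₂(t) with optimal value z̄
    (hval : zbar = b ⬝ᵥ ubar - t ⬝ᵥ wbar)
    (hopt : ∀ u : Fin m → ℝ, ∀ w : Fin q → ℝ, 0 ≤ u → Bᵀ.mulVec u = Pᵀ.mulVec w →
      c ⬝ᵥ w = 1 → 0 ≤ Yᵀ.mulVec w → b ⬝ᵥ u - t ⬝ᵥ w ≤ zbar)
    -- LP strong duality: a primal optimal solution with the same value exists
    (hprimal : ∃ x : Fin n → ℝ, b ≤ B.mulVec x ∧ t + zbar • c - P.mulVec x ∈ C) :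
    (∀ y ∈ UP, b ⬝ᵥ ubar ≤ wbar ⬝ᵥ y) ∧
    (t + zbar • c) ∈ UP ∧ wbar ⬝ᵥ (t + zbar • c) = b ⬝ᵥ ubar := by
  have key : ∀ y ∈ UP, b ⬝ᵥ ubar ≤ wbar ⬝ᵥ y := by
    intro y hy
    rw [hUP] at hy
    obtain ⟨x, hx, k, hk, rfl⟩ := hy
    rw [hS] at hx
    rw [hC] at hk
    obtain ⟨lam, hlam, rfl⟩ := hk
    have h1 : wbar ⬝ᵥ P.mulVec x = Pᵀ.mulVec wbar ⬝ᵥ x := by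
      rw [Matrix.mulVec_transpose, Matrix.dotProduct_mulVec]
    have h2 : wbar ⬝ᵥ Y.mulVec lam = Yᵀ.mulVec wbar ⬝ᵥ lam := by
      rw [Matrix.mulVec_transpose, Matrix.dotProduct_mulVec]
    have h3 : (0:ℝ) ≤ Yᵀ.mulVec wbar ⬝ᵥ lam :=
      Finset.sum_nonneg fun i _ => mul_nonneg (hYw i) (hlam i)
    have h4 : b ⬝ᵥ ubar ≤ B.mulVec x ⬝ᵥ ubar := by
      apply Finset.sum_le_sum
      intro i _
      exact mul_le_mul_of_nonneg_right (hx i) (hufeas i)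
    have h5 : B.mulVec x ⬝ᵥ ubar = Pᵀ.mulVec wbar ⬝ᵥ x := by
      rw [dotProduct_comm, Matrix.dotProduct_mulVec, ← Matrix.mulVec_transpose, hBu]
    rw [dotProduct_add, h1, h2]
    calc b ⬝ᵥ ubar ≤ Pᵀ.mulVec wbar ⬝ᵥ x := h5 ▸ h4
      _ ≤ Pᵀ.mulVec wbar ⬝ᵥ x + Yᵀ.mulVec wbar ⬝ᵥ lam := le_add_of_nonneg_right h3
  refine ⟨key, ?_, ?_⟩
  · obtain ⟨x, hx, hk⟩ := hprimal
    rw [hUP]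
    exact ⟨x, by rw [hS]; exact hx, _, hk, by abel⟩
  · have : wbar ⬝ᵥ (t + zbar • c) = wbar ⬝ᵥ t + zbar * (wbar ⬝ᵥ c) := by
      simp [dotProduct_add, dotProduct_smul, smul_eq_mul]
    rw [this, dotProduct_comm wbar c, hcw, dotProduct_comm wbar t]
    rw [hval]; ring
end

section
/- Weak duality: if y ∈ 𝒫 = P[S] + C and y* ∈ 𝒟* = D*[T] - K, then φ(y, y*) ≥ 0, where φ(y,y*) = Σ_{i=1}^{q-1} y_i y*_i + y_q(1 - Σ_{i=1}^{q-1} c_i y*_i) - y*_q. -/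
open Matrix

/-- The coupling function of geometric duality (dimension q+1, last coordinate plays
the role of the q-th coordinate). -/
def phiCoupling (q : ℕ) (c y ystar : Fin (q + 1) → ℝ) : ℝ :=
  (∑ i : Fin q, y i.castSucc * ystar i.castSucc)
    + y (Fin.last q) * (1 - ∑ i : Fin q, c i.castSucc * ystar i.castSucc)
    - ystar (Fin.last q)

/-- Weak duality: y ∈ 𝒫 and y* ∈ 𝒟* imply φ(y, y*) ≥ 0. -/
theorem weak_duality
    (q n m p : ℕ)
    (B : Matrix (Fin m) (Fin n) ℝ) (b : Fin m → ℝ) (P : Matrix (Fin (q+1)) (Fin n) ℝ)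
    (Y : Matrix (Fin (q+1)) (Fin p) ℝ)
    (C : Set (Fin (q+1) → ℝ))
    (hC : C = {y | ∃ lam : Fin p → ℝ, 0 ≤ lam ∧ y = Y.mulVec lam})
    (hCpointed : ∀ x ∈ C, -x ∈ C → x = 0)
    (c : Fin (q+1) → ℝ) (hc : c ∈ interior C) (hcq : c (Fin.last q) = 1)
    (S : Set (Fin n → ℝ)) (hS : S = {x | b ≤ B.mulVec x})
    (UP : Set (Fin (q+1) → ℝ))
    (hUP : UP = {y | ∃ x ∈ S, ∃ k ∈ C, y = P.mulVec x + k})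
    (T : Set ((Fin m → ℝ) × (Fin (q+1) → ℝ)))
    (hT : T = {uw | 0 ≤ uw.1 ∧ Bᵀ.mulVec uw.1 = Pᵀ.mulVec uw.2 ∧
      c ⬝ᵥ uw.2 = 1 ∧ 0 ≤ Yᵀ.mulVec uw.2})
    (Dstar : Set (Fin (q+1) → ℝ))
    (hDstar : Dstar = {d | ∃ uw ∈ T, ∃ k : ℝ, 0 ≤ k ∧
      d = Function.update uw.2 (Fin.last q) (b ⬝ᵥ uw.1) - k • (Pi.single (Fin.last q) 1 : Fin (q+1) → ℝ)})
    (y ystar : Fin (q+1) → ℝ) (hy : y ∈ UP) (hystar : ystar ∈ Dstar) :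
    0 ≤ phiCoupling q c y ystar := by
  subst hC hS hUP hT hDstar
  obtain ⟨x, hx, k, ⟨lam, hlam, hk⟩, hyeq⟩ := hy
  obtain ⟨⟨u, w⟩, ⟨hu, hBP, hcw, hYw⟩, k', hk', hyseq⟩ := hystar
  -- values of ystar coordinates
  have hstar_cast : ∀ i : Fin q, ystar i.castSucc = w i.castSucc := by
    intro i
    have hne : (i.castSucc : Fin (q+1)) ≠ Fin.last q := Fin.castSucc_lt_last i |>.ne
    simp [hyseq, Function.update_of_ne hne, Pi.single_eq_of_ne hne]
  have hstar_last : ystar (Fin.last q) = b ⬝ᵥ u - k' := by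
    simp [hyseq]
  -- w last = 1 - ∑ c_i w_i
  have hcw' : (∑ i : Fin q, c i.castSucc * w i.castSucc) + w (Fin.last q) = 1 := by
    have := hcw
    rw [show c ⬝ᵥ w = ∑ i : Fin (q+1), c i * w i from rfl, Fin.sum_univ_castSucc] at this
    simpa [hcq] using this
  have hphi : phiCoupling q c y ystar = w ⬝ᵥ y - b ⬝ᵥ u + k' := by
    simp only [phiCoupling, hstar_last]
    have h1 : (1 - ∑ i : Fin q, c i.castSucc * ystar i.castSucc) = w (Fin.last q) := by
      have : (∑ i : Fin q, c i.castSucc * ystar i.castSucc)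
          = ∑ i : Fin q, c i.castSucc * w i.castSucc := by
        refine Finset.sum_congr rfl fun i _ => by rw [hstar_cast i]
      rw [this]; linarith [hcw']
    rw [h1, show w ⬝ᵥ y = ∑ i : Fin (q+1), w i * y i from rfl, Fin.sum_univ_castSucc]
    have : (∑ i : Fin q, y i.castSucc * ystar i.castSucc)
        = ∑ i : Fin q, w i.castSucc * y i.castSucc := by
      refine Finset.sum_congr rfl fun i _ => by rw [hstar_cast i, mul_comm]
    rw [this]; ring
  -- w ⬝ᵥ y ≥ b ⬝ᵥ u
  have hwk : 0 ≤ w ⬝ᵥ k := by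
    rw [hk, dotProduct_mulVec, ← mulVec_transpose]
    exact Finset.sum_nonneg fun i _ => mul_nonneg (hYw i) (hlam i)
  have hwP : w ⬝ᵥ P.mulVec x = u ⬝ᵥ B.mulVec x := by
    rw [dotProduct_mulVec, ← mulVec_transpose, ← hBP, mulVec_transpose, ← dotProduct_mulVec]
  have hub : b ⬝ᵥ u ≤ u ⬝ᵥ B.mulVec x := by
    rw [dotProduct_comm]
    exact Finset.sum_le_sum fun i _ => mul_le_mul_of_nonneg_left (hx i) (hu i)
  have hwy : b ⬝ᵥ u ≤ w ⬝ᵥ y := by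
    rw [hyeq, dotProduct_add, hwP]
    linarith
  rw [hphi]; linarith
end

section
/- Strong duality (primal part): assume S = {x : Bx ≥ b} and T are both nonempty. If y ∈ ℝ^q satisfies φ(y, y*) ≥ 0 for all y* ∈ 𝒟*, then y ∈ 𝒫 = P[S] + C. -/
/-!
If `y ∉ P[S] + C`, Farkas' lemma applied to the system `Bx ≥ b, Px + Yλ = y, λ ≥ 0` gives
`u ≥ 0` and `w` with `Bᵀu = Pᵀw`, `Yᵀw ≥ 0` and `wᵀy < bᵀu`. Such a `w` is nonnegative on `C`,
so `cᵀw ≥ 0` with equality only for `w = 0`, since `c` is interior. If `cᵀw > 0`, rescaling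
puts `(u, w)` into `T`, and the corresponding point of `𝒟*` has `φ(y, ·) = wᵀy - bᵀu < 0`.
If `w = 0`, then `Bᵀu = 0` and `bᵀu > 0`, which weak duality forbids since `S` is nonempty.
-/

open Matrix

open Finset

variable {μ ι κ ρ : Type*} [Fintype μ] [Fintype ι] [Fintype κ] [Fintype ρ]

theorem mem_hull_or_exists_dotProduct_neg [DecidableEq (κ → ℝ)] (s : Finset (κ → ℝ))
    (v : κ → ℝ) :
    v ∈ PointedCone.hull ℝ (s : Set (κ → ℝ)) ∨ ∃ w, (∀ a ∈ s, 0 ≤ w ⬝ᵥ a) ∧ w ⬝ᵥ v < 0 := by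
  induction hn : s.card using Nat.strong_induction_on generalizing s v with
  | _ n ih =>
  rcases s.eq_empty_or_nonempty with rfl | ⟨a, ha⟩
  · by_cases hv : v = 0
    · exact .inl (hv ▸ zero_mem _)
    · have hvv : 0 < v ⬝ᵥ v := (Fintype.sum_nonneg fun i => mul_self_nonneg (v i)).lt_of_ne'
        (dotProduct_self_eq_zero.not.2 hv)
      exact .inr ⟨-v, by simp, by rwa [neg_dotProduct, neg_lt_zero]⟩
  have hcard : (s.erase a).card < n := hn ▸ card_erase_lt_of_mem ha
  rcases ih _ hcard (s.erase a) v rfl with hv | ⟨w, hw, hwv⟩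
  · exact .inl (Submodule.span_mono (by simp) hv)
  by_cases hwa : 0 ≤ w ⬝ᵥ a
  · refine .inr ⟨w, fun b hb => ?_, hwv⟩
    rcases eq_or_ne b a with rfl | hba
    exacts [hwa, hw b (mem_erase.2 ⟨hba, hb⟩)]
  rw [not_le] at hwa
  -- Projecting along `a` onto `{x | w ⬝ᵥ x = 0}` kills `a`, so induction applies to the images.
  set π : (κ → ℝ) → κ → ℝ := fun x => x - (w ⬝ᵥ x / w ⬝ᵥ a) • a with hπ
  rcases ih _ (card_image_le.trans_lt hcard) ((s.erase a).image π) (π v) rfl with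
    hπv | ⟨w', hw', hwv'⟩
  · refine .inl ?_
    set K := PointedCone.hull ℝ (s : Set (κ → ℝ))
    have ha' : a ∈ K := PointedCone.subset_hull ha
    have himage : ((s.erase a).image π : Set (κ → ℝ)) ⊆ K := by
      intro x hx
      obtain ⟨b, hb, rfl⟩ := mem_image.1 hx
      have hπb : π b = b + (-(w ⬝ᵥ b / w ⬝ᵥ a)) • a := by simp [hπ, sub_eq_add_neg]
      have hcoef : 0 ≤ -(w ⬝ᵥ b / w ⬝ᵥ a) :=
        neg_nonneg.2 (div_nonpos_of_nonneg_of_nonpos (hw b hb) hwa.le)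
      rw [hπb]
      exact add_mem (PointedCone.subset_hull (mem_of_mem_erase hb)) (K.smul_mem hcoef ha')
    have hv : v = π v + (w ⬝ᵥ v / w ⬝ᵥ a) • a := by simp [hπ]
    rw [hv]
    exact add_mem (Submodule.span_le.2 himage hπv)
      (K.smul_mem (div_nonneg_of_nonpos hwv.le hwa.le) ha')
  · have hpullback : ∀ x, (w' - (w' ⬝ᵥ a / w ⬝ᵥ a) • w) ⬝ᵥ x = w' ⬝ᵥ π x := fun x => by
      simp only [hπ, sub_dotProduct, dotProduct_sub, smul_dotProduct, dotProduct_smul, smul_eq_mul]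
      ring
    refine .inr ⟨_, fun b hb => ?_, by rwa [hpullback]⟩
    rw [hpullback]
    rcases eq_or_ne b a with rfl | hba
    · simp [hπ, hwa.ne]
    · exact hw' _ (mem_image_of_mem _ (mem_erase.2 ⟨hba, hb⟩))

theorem Matrix.exists_nonneg_mulVec_eq_or_exists_vecMul_nonneg (A : Matrix κ ι ℝ) (b : κ → ℝ) :
    (∃ x, 0 ≤ x ∧ A *ᵥ x = b) ∨ ∃ y, 0 ≤ y ᵥ* A ∧ y ⬝ᵥ b < 0 := by
  classical
  rcases mem_hull_or_exists_dotProduct_neg (univ.image fun j => Aᵀ j) b with hb | ⟨y, hy, hyb⟩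
  · rw [coe_image, coe_univ, Set.image_univ, Submodule.mem_span_range_iff_exists_fun] at hb
    obtain ⟨c, rfl⟩ := hb
    refine .inl ⟨fun i => c i, fun i => (c i).2, ?_⟩
    ext k
    simp [mulVec, dotProduct, ← Nonneg.coe_smul, mul_comm]
  · exact .inr ⟨y, fun i => hy _ (mem_image_of_mem _ (mem_univ i)), hyb⟩

theorem exists_le_mulVec_or_exists_dual_certificate [DecidableEq μ] (B : Matrix μ ι ℝ) (b : μ → ℝ)
    (P : Matrix κ ι ℝ) (Y : Matrix κ ρ ℝ) (y : κ → ℝ) :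
    (∃ x, b ≤ B *ᵥ x ∧ ∃ lam, 0 ≤ lam ∧ y = P *ᵥ x + Y *ᵥ lam) ∨
      ∃ u w, 0 ≤ u ∧ Bᵀ *ᵥ u = Pᵀ *ᵥ w ∧ 0 ≤ Yᵀ *ᵥ w ∧ w ⬝ᵥ y < b ⬝ᵥ u := by
  -- `x` is split as `xp - xm` and `Bx ≥ b` as `Bx - s = b` with a slack `s ≥ 0`
  rcases (fromBlocks (fromCols B (-B)) (fromCols (-1 : Matrix μ μ ℝ) 0) (fromCols P (-P))
    (fromCols (0 : Matrix κ μ ℝ) Y))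
    |>.exists_nonneg_mulVec_eq_or_exists_vecMul_nonneg (Sum.elim b y) with
    ⟨z, hz, hzb⟩ | ⟨r, hr, hrb⟩
  · obtain ⟨xp, xm, s, lam, rfl⟩ :
        ∃ xp xm s lam, z = Sum.elim (Sum.elim xp xm) (Sum.elim s lam) :=
      ⟨_, _, _, _, by ext ((i | i) | (i | i)) <;> rfl⟩
    simp only [Pi.le_def, Sum.forall, Sum.elim_inl, Sum.elim_inr, Pi.zero_apply] at hz
    obtain ⟨-, hs, hlam⟩ := hz
    simp only [fromBlocks_mulVec, fromCols_mulVec, Sum.elim_comp_inl, Sum.elim_comp_inr,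
      zero_mulVec, add_zero, zero_add, Sum.elim_eq_iff, neg_mulVec, one_mulVec] at hzb
    obtain ⟨hBs, hPY⟩ := hzb
    refine .inl ⟨xp - xm, fun i => ?_, lam, hlam, ?_⟩
    · have := congrFun hBs i
      simp only [Pi.add_apply, Pi.neg_apply] at this
      simp only [mulVec_sub, Pi.sub_apply]
      linarith [hs i]
    · rw [← hPY, mulVec_sub, sub_eq_add_neg]
  · obtain ⟨u, w, rfl⟩ : ∃ u w, r = Sum.elim u w := ⟨_, _, (Sum.elim_comp_inl_inr r).symm⟩
    simp only [vecMul_fromBlocks, vecMul_fromCols, Sum.elim_comp_inl, Sum.elim_comp_inr,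
      ← Sum.elim_add_add, vecMul_zero, add_zero, zero_add, vecMul_neg, vecMul_one,
      sumElim_dotProduct_sumElim] at hr hrb
    simp only [Pi.le_def, Sum.forall, Sum.elim_inl, Sum.elim_inr, Pi.zero_apply] at hr
    obtain ⟨⟨hBP, hBP'⟩, hu, hY⟩ := hr
    refine .inr ⟨-u, w, hu, ?_, by rwa [mulVec_transpose], ?_⟩
    · rw [mulVec_transpose, mulVec_transpose, neg_vecMul, neg_eq_iff_add_eq_zero]
      refine le_antisymm (fun i => ?_) hBP
      have := hBP' i
      simp only [Pi.add_apply, Pi.neg_apply, Pi.zero_apply] at this ⊢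
      linarith
    · rw [dotProduct_neg, dotProduct_comm b u]
      linarith

open Filter Topology in
theorem eq_zero_of_dotProduct_nonpos_of_mem_interior {K : Set (κ → ℝ)} {c w : κ → ℝ}
    (hK : ∀ k ∈ K, 0 ≤ w ⬝ᵥ k) (hc : c ∈ interior K)
    (hcw : w ⬝ᵥ c ≤ 0) : w = 0 := by
  have hlim : Tendsto (fun t : ℝ => c - t • w) (𝓝[>] 0) (𝓝 c) := by
    have : Continuous fun t : ℝ => c - t • w := by fun_prop
    simpa using (this.tendsto 0).mono_left nhdsWithin_le_nhds
  obtain ⟨t, htK, ht⟩ :=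
    ((hlim.eventually (mem_interior_iff_mem_nhds.1 hc)).and self_mem_nhdsWithin).exists
  have := hK _ htK
  rw [dotProduct_sub, dotProduct_smul, smul_eq_mul] at this
  have hww : w ⬝ᵥ w ≤ 0 := by nlinarith
  exact dotProduct_self_eq_zero.1 (le_antisymm hww
    (Fintype.sum_nonneg fun i => mul_self_nonneg (w i)))

theorem dotProduct_le_dotProduct_mulVec_transpose {B : Matrix μ ι ℝ} {b u : μ → ℝ} {x : ι → ℝ}
    (hu : 0 ≤ u) (hx : b ≤ B *ᵥ x) :
    b ⬝ᵥ u ≤ (Bᵀ *ᵥ u) ⬝ᵥ x := by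
  rw [mulVec_transpose, ← dotProduct_mulVec, dotProduct_comm]
  exact dotProduct_le_dotProduct_of_nonneg_left hx hu

theorem phiCoupling_update_last {q : ℕ} {c w : Fin (q + 1) → ℝ} (hcq : c (Fin.last q) = 1)
    (hcw : c ⬝ᵥ w = 1) (y : Fin (q + 1) → ℝ) (β : ℝ) :
    phiCoupling q c y (Function.update w (Fin.last q) β) = w ⬝ᵥ y - β := by
  simp only [dotProduct, Fin.sum_univ_castSucc, hcq, one_mul] at hcw ⊢
  simp only [phiCoupling, Function.update_of_ne (Fin.castSucc_ne_last _), Function.update_self]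
  rw [show 1 - ∑ i : Fin q, c i.castSucc * w i.castSucc = w (Fin.last q) by linarith]
  simp_rw [mul_comm (y _)]

theorem strong_duality_primal_general
    (q n m p : ℕ)
    (B : Matrix (Fin m) (Fin n) ℝ) (b : Fin m → ℝ) (P : Matrix (Fin (q+1)) (Fin n) ℝ)
    (Y : Matrix (Fin (q+1)) (Fin p) ℝ)
    (C : Set (Fin (q+1) → ℝ))
    (hC : C = {y | ∃ lam : Fin p → ℝ, 0 ≤ lam ∧ y = Y.mulVec lam})
    (c : Fin (q+1) → ℝ) (hc : c ∈ interior C) (hcq : c (Fin.last q) = 1)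
    (S : Set (Fin n → ℝ)) (hS : S = {x | b ≤ B.mulVec x}) (hSne : S.Nonempty)
    (UP : Set (Fin (q+1) → ℝ))
    (hUP : UP = {y | ∃ x ∈ S, ∃ k ∈ C, y = P.mulVec x + k})
    (T : Set ((Fin m → ℝ) × (Fin (q+1) → ℝ)))
    (hT : T = {uw | 0 ≤ uw.1 ∧ Bᵀ.mulVec uw.1 = Pᵀ.mulVec uw.2 ∧
      c ⬝ᵥ uw.2 = 1 ∧ 0 ≤ Yᵀ.mulVec uw.2})
    (Dstar : Set (Fin (q+1) → ℝ))
    (hDstar : Dstar = {d | ∃ uw ∈ T, ∃ k : ℝ, 0 ≤ k ∧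
      d = Function.update uw.2 (Fin.last q) (b ⬝ᵥ uw.1) - k • (Pi.single (Fin.last q) 1 : Fin (q+1) → ℝ)})
    (y : Fin (q+1) → ℝ)
    (hy : ∀ ystar ∈ Dstar, 0 ≤ phiCoupling q c y ystar) :
    y ∈ UP := by
  subst hC hS hUP hT hDstar
  rcases exists_le_mulVec_or_exists_dual_certificate B b P Y y with
    ⟨x, hx, lam, hlam, rfl⟩ | ⟨u, w, hu, hBP, hY, hwy⟩
  · exact ⟨x, hx, _, ⟨lam, hlam, rfl⟩, rfl⟩
  exfalso
  rcases le_or_gt (c ⬝ᵥ w) 0 with hcw | hcw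
  · have hw : w = 0 := by
      refine eq_zero_of_dotProduct_nonpos_of_mem_interior ?_ hc (by rwa [dotProduct_comm])
      rintro _ ⟨lam, hlam, rfl⟩
      rw [dotProduct_mulVec, ← mulVec_transpose]
      exact dotProduct_nonneg_of_nonneg hY hlam
    obtain ⟨x, hx⟩ := hSne
    have := dotProduct_le_dotProduct_mulVec_transpose hu hx
    rw [hBP, hw, mulVec_zero, zero_dotProduct] at this
    rw [hw, zero_dotProduct] at hwy
    linarith
  · set s := (c ⬝ᵥ w)⁻¹
    have hs : 0 < s := inv_pos.2 hcw
    have hscw : c ⬝ᵥ s • w = 1 := by rw [dotProduct_smul, smul_eq_mul, inv_mul_cancel₀ hcw.ne']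
    have hφ := hy _ ⟨(s • u, s • w),
      ⟨smul_nonneg hs.le hu, by simp only [mulVec_smul, hBP], hscw,
        by simpa only [mulVec_smul] using smul_nonneg hs.le hY⟩,
      0, le_rfl, by rw [zero_smul, sub_zero]⟩
    rw [phiCoupling_update_last hcq hscw, smul_dotProduct, dotProduct_smul, smul_eq_mul,
      smul_eq_mul, ← mul_sub] at hφ
    exact (mul_neg_of_pos_of_neg hs (sub_neg.2 hwy)).not_ge hφ

/-- Strong duality, primal part: if φ(y, y*) ≥ 0 for all y* ∈ 𝒟*, then y ∈ 𝒫. -/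
theorem strong_duality_primal
    (q n m p : ℕ)
    (B : Matrix (Fin m) (Fin n) ℝ) (b : Fin m → ℝ) (P : Matrix (Fin (q+1)) (Fin n) ℝ)
    (Y : Matrix (Fin (q+1)) (Fin p) ℝ)
    (C : Set (Fin (q+1) → ℝ))
    (hC : C = {y | ∃ lam : Fin p → ℝ, 0 ≤ lam ∧ y = Y.mulVec lam})
    (hCpointed : ∀ x ∈ C, -x ∈ C → x = 0)
    (c : Fin (q+1) → ℝ) (hc : c ∈ interior C) (hcq : c (Fin.last q) = 1)
    (S : Set (Fin n → ℝ)) (hS : S = {x | b ≤ B.mulVec x}) (hSne : S.Nonempty)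
    (UP : Set (Fin (q+1) → ℝ))
    (hUP : UP = {y | ∃ x ∈ S, ∃ k ∈ C, y = P.mulVec x + k})
    (T : Set ((Fin m → ℝ) × (Fin (q+1) → ℝ)))
    (hT : T = {uw | 0 ≤ uw.1 ∧ Bᵀ.mulVec uw.1 = Pᵀ.mulVec uw.2 ∧
      c ⬝ᵥ uw.2 = 1 ∧ 0 ≤ Yᵀ.mulVec uw.2})
    (hTne : T.Nonempty)
    (Dstar : Set (Fin (q+1) → ℝ))
    (hDstar : Dstar = {d | ∃ uw ∈ T, ∃ k : ℝ, 0 ≤ k ∧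
      d = Function.update uw.2 (Fin.last q) (b ⬝ᵥ uw.1) - k • (Pi.single (Fin.last q) 1 : Fin (q+1) → ℝ)})
    (y : Fin (q+1) → ℝ)
    (hy : ∀ ystar ∈ Dstar, 0 ≤ phiCoupling q c y ystar) :
    y ∈ UP :=
  strong_duality_primal_general q n m p B b P Y C hC c hc hcq S hS hSne UP hUP T hT Dstar hDstar y
    hy
end

section
/- Strong duality (dual part): assume S and T are both nonempty. If y* ∈ ℝ^q satisfies φ(y, y*) ≥ 0 for all y ∈ 𝒫 = P[S] + C, then y* ∈ 𝒟* = D*[T] - K. -/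
/-!
Write `φ(y, y*) = w ⬝ y - y*_q` with `w = w(y*)`. The hypothesis says that `y*_q` is a lower
bound of `w ⬝ (P x + k)` over `x ∈ S`, `k ∈ C`. As `C` is a cone, `w` is nonnegative on `C`,
i.e. `Yᵀ w ≥ 0`; taking `k = 0`, `y*_q` bounds the linear program `min {w ⬝ P x | B x ≥ b}` from
below. By LP duality there is `u ≥ 0` with `Bᵀ u = Pᵀ w` and `b ⬝ u ≥ y*_q`, so `(u, w) ∈ T` and
`y* = D*(u, w) - (b ⬝ u - y*_q) e_q`.

LP duality follows from Farkas' lemma by homogenization, and Farkas' lemma is hyperplane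
separation from the cone `{v ᵥ* A | v ≥ 0}`, which is closed by the conic Carathéodory theorem.
-/

open Matrix

open Function Set LinearMap

lemma nonneg_of_forall_le_mul {𝕜 : Type*} [Field 𝕜] [LinearOrder 𝕜] [IsStrictOrderedRing 𝕜]
    {a r : 𝕜} (h : ∀ t, 0 ≤ t → a ≤ t * r) : 0 ≤ r := by
  by_contra! hr
  have hmul : (|a| + 1) / -r * r = -(|a| + 1) := by rw [div_neg, neg_mul, div_mul_cancel₀ _ hr.ne]
  have := h ((|a| + 1) / -r) (div_nonneg (by positivity) (by linarith))
  linarith [neg_abs_le a]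

def supportedOn {ι : Type*} (𝕜 : Type*) [Semiring 𝕜] (s : Set ι) : Submodule 𝕜 (ι → 𝕜) :=
  Submodule.pi sᶜ fun _ => ⊥

@[simp]
lemma mem_supportedOn {ι 𝕜 : Type*} [Semiring 𝕜] {s : Set ι} {u : ι → 𝕜} :
    u ∈ supportedOn 𝕜 s ↔ ∀ i ∉ s, u i = 0 := by
  simp [supportedOn, Submodule.mem_pi]

section ConicCaratheodory

variable {ι 𝕜 M : Type*} [Fintype ι] [Field 𝕜] [LinearOrder 𝕜] [IsStrictOrderedRing 𝕜]
  [AddCommGroup M] [Module 𝕜 M]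

/-- Ratio test, with `θ = min {w i / u i | 0 < u i}`. -/
lemma exists_nonneg_sub_smul_eq_zero {w u : ι → 𝕜} (hw : 0 ≤ w) (hu : ∃ j, 0 < u j) :
    ∃ θ : 𝕜, 0 ≤ w - θ • u ∧ ∃ i, 0 < u i ∧ (w - θ • u) i = 0 := by
  obtain ⟨j, hj⟩ := hu
  obtain ⟨i₀, hi₀, hmin⟩ := Finset.exists_min_image (Finset.univ.filter fun i => 0 < u i)
    (fun i => w i / u i) ⟨j, by simpa using hj⟩
  rw [Finset.mem_filter] at hi₀
  have hθ : 0 ≤ w i₀ / u i₀ := div_nonneg (hw i₀) hi₀.2.le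
  refine ⟨w i₀ / u i₀, fun i => ?_, i₀, hi₀.2, ?_⟩
  · have hle : w i₀ / u i₀ * u i ≤ w i := by
      rcases lt_or_ge 0 (u i) with hui | hui
      · exact (le_div_iff₀ hui).1 (hmin i (by simpa using hui))
      · exact (mul_nonpos_of_nonneg_of_nonpos hθ hui).trans (hw i)
    simpa using hle
  · simp [div_mul_cancel₀ _ hi₀.2.ne']

lemma exists_nonneg_map_eq_ncard_support_lt (f : (ι → 𝕜) →ₗ[𝕜] M) {w : ι → 𝕜} (hw : 0 ≤ w)
    (hker : ¬Disjoint (supportedOn 𝕜 (support w)) (ker f)) :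
    ∃ w' : ι → 𝕜, 0 ≤ w' ∧ f w' = f w ∧ (support w').ncard < (support w).ncard := by
  obtain ⟨u, hu, hfu, hpos⟩ : ∃ u, (∀ i, w i = 0 → u i = 0) ∧ f u = 0 ∧ ∃ j, 0 < u j := by
    simp only [Submodule.disjoint_def, mem_supportedOn, mem_support, not_not, mem_ker,
      not_forall] at hker
    obtain ⟨u, hu, hfu, hne⟩ := hker
    obtain ⟨j, hj⟩ := Function.ne_iff.1 hne
    rcases hj.lt_or_gt with hj | hj
    · exact ⟨-u, fun i hi => by simp [hu i hi], by simp [hfu], j, by simpa using hj⟩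
    · exact ⟨u, hu, hfu, j, hj⟩
  obtain ⟨θ, hnonneg, i, hui, hi⟩ := exists_nonneg_sub_smul_eq_zero hw hpos
  refine ⟨w - θ • u, hnonneg, by simp [hfu], Set.ncard_lt_ncard ?_⟩
  refine (Set.ssubset_iff_of_subset fun k hk => ?_).2 ⟨i, fun hwi => hui.ne' (hu i hwi), ?_⟩
  · contrapose! hk
    simp [notMem_support.1 hk, hu k (notMem_support.1 hk)]
  · simpa using hi

/-- Conic Carathéodory theorem. -/
theorem exists_nonneg_map_eq_disjoint_ker (f : (ι → 𝕜) →ₗ[𝕜] M) {v : ι → 𝕜} (hv : 0 ≤ v) :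
    ∃ w : ι → 𝕜, 0 ≤ w ∧ f w = f v ∧ Disjoint (supportedOn 𝕜 (support w)) (ker f) := by
  obtain ⟨w, ⟨hw, hfw⟩, hmin⟩ := (measure fun w : ι → 𝕜 => (support w).ncard).wf.has_min
    {w | 0 ≤ w ∧ f w = f v} ⟨v, hv, rfl⟩
  refine ⟨w, hw, hfw, by_contra fun hker => ?_⟩
  obtain ⟨w', hw', hfw', hlt⟩ := exists_nonneg_map_eq_ncard_support_lt f hw hker
  exact hmin w' ⟨hw', hfw'.trans hfw⟩ hlt

end ConicCaratheodory

theorem LinearMap.isClosed_image_of_disjoint_ker {𝕜 E F : Type*} [NontriviallyNormedField 𝕜]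
    [CompleteSpace 𝕜] [AddCommGroup E] [TopologicalSpace E] [IsTopologicalAddGroup E]
    [Module 𝕜 E] [ContinuousSMul 𝕜 E] [T2Space E] [FiniteDimensional 𝕜 E]
    [AddCommGroup F] [TopologicalSpace F] [IsTopologicalAddGroup F] [Module 𝕜 F]
    [ContinuousSMul 𝕜 F] [T2Space F] (f : E →ₗ[𝕜] F) {V : Submodule 𝕜 E}
    (hV : Disjoint V (ker f)) {A : Set E} (hA : IsClosed A) (hAV : A ⊆ V) :
    IsClosed (f '' A) := by
  have hrestrict : f '' A = f.domRestrict V '' (Subtype.val ⁻¹' A) := by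
    rw [domRestrict, coe_comp, image_comp, Submodule.coe_subtype,
      image_preimage_eq_of_subset (by simpa using hAV)]
  rw [hrestrict]
  exact (isClosedEmbedding_of_injective (ker_eq_bot.2 (injective_domRestrict_iff.2 hV))).isClosedMap
    _ (hA.preimage continuous_subtype_val)

/-- Finitely generated convex cones are closed. -/
theorem LinearMap.isClosed_image_Ici_zero {ι E : Type*} [Fintype ι] [AddCommGroup E]
    [TopologicalSpace E] [IsTopologicalAddGroup E] [Module ℝ E] [ContinuousSMul ℝ E] [T2Space E]
    (f : (ι → ℝ) →ₗ[ℝ] E) : IsClosed (f '' Ici 0) := by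
  have hcover : f '' Ici 0 = ⋃ s ∈ {s : Set ι | Disjoint (supportedOn ℝ s) (ker f)},
      f '' (Ici 0 ∩ supportedOn ℝ s) := by
    refine Subset.antisymm ?_ (iUnion₂_subset fun s _ => image_mono inter_subset_left)
    rintro _ ⟨v, hv, rfl⟩
    obtain ⟨w, hw, hfw, hker⟩ := exists_nonneg_map_eq_disjoint_ker f hv
    exact mem_biUnion hker ⟨w, ⟨hw, by simp⟩, hfw⟩
  rw [hcover]
  exact (toFinite _).isClosed_biUnion fun s hs => f.isClosed_image_of_disjoint_ker hs
    (isClosed_Ici.inter (Submodule.closed_of_finiteDimensional _)) inter_subset_right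

namespace Matrix

/-- Farkas' lemma. -/
theorem exists_nonneg_vecMul_eq_of_forall_nonneg {ι κ : Type*} [Fintype ι] [Fintype κ]
    (A : Matrix ι κ ℝ) (d : κ → ℝ) (h : ∀ y, 0 ≤ A *ᵥ y → 0 ≤ d ⬝ᵥ y) :
    ∃ v, 0 ≤ v ∧ v ᵥ* A = d := by
  classical
  by_contra hd
  let K : ProperCone ℝ (κ → ℝ) :=
    ⟨(PointedCone.positive ℝ (ι → ℝ)).map Aᵀ.mulVecLin, by
      simpa using Aᵀ.mulVecLin.isClosed_image_Ici_zero⟩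
  obtain ⟨f, hfK, hfd⟩ := K.hyperplane_separation_point (x₀ := d) (by simpa [K] using hd)
  set y := (dotProductEquiv ℝ κ).symm f.toLinearMap
  have hf : ∀ x, f x = y ⬝ᵥ x := fun x =>
    (LinearMap.congr_fun ((dotProductEquiv ℝ κ).apply_symm_apply f.toLinearMap) x).symm
  have hAy : 0 ≤ A *ᵥ y := fun i => by
    have := hfK (Pi.single i 1 ᵥ* A) (PointedCone.mem_map.2 ⟨_, by simp, mulVec_transpose A _⟩)
    rwa [hf, dotProduct_comm, ← dotProduct_mulVec, single_one_dotProduct] at this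
  have := h y hAy
  rw [dotProduct_comm, ← hf] at this
  exact hfd.not_ge this

variable {ι κ : Type*} [Fintype κ] {B : Matrix ι κ ℝ} {b : ι → ℝ} {c : κ → ℝ} {α : ℝ}

/-- For `t > 0` rescale `x` by `t⁻¹`; for `t = 0`, `x` is a recession direction of the
polyhedron `{x | b ≤ B x}`. -/
lemma mul_le_dotProduct_of_smul_le_mulVec (hfeas : ∃ x, b ≤ B *ᵥ x)
    (hbound : ∀ x, b ≤ B *ᵥ x → α ≤ c ⬝ᵥ x) {x : κ → ℝ} {t : ℝ} (ht : 0 ≤ t)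
    (hx : t • b ≤ B *ᵥ x) : t * α ≤ c ⬝ᵥ x := by
  rcases ht.eq_or_lt with rfl | ht
  · obtain ⟨x₀, hx₀⟩ := hfeas
    rw [zero_smul] at hx
    rw [zero_mul]
    refine nonneg_of_forall_le_mul (a := α - c ⬝ᵥ x₀) fun s hs => ?_
    have := hbound (x₀ + s • x) (by
      rw [mulVec_add, mulVec_smul]
      exact le_add_of_le_of_nonneg hx₀ (smul_nonneg hs hx))
    rw [dotProduct_add, dotProduct_smul, smul_eq_mul] at this
    linarith
  · have := hbound (t⁻¹ • x) (by rwa [mulVec_smul, le_inv_smul_iff_of_pos ht])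
    rw [dotProduct_smul, smul_eq_mul] at this
    calc t * α ≤ t * (t⁻¹ * c ⬝ᵥ x) := by gcongr
      _ = c ⬝ᵥ x := by field_simp

/-- Linear programming duality. -/
theorem exists_nonneg_vecMul_eq_le_dotProduct [Fintype ι] (hfeas : ∃ x, b ≤ B *ᵥ x)
    (hbound : ∀ x, b ≤ B *ᵥ x → α ≤ c ⬝ᵥ x) :
    ∃ u, 0 ≤ u ∧ u ᵥ* B = c ∧ α ≤ b ⬝ᵥ u := by
  let A : Matrix (ι ⊕ Unit) (κ ⊕ Unit) ℝ := fromBlocks B (replicateCol Unit (-b)) 0 1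
  have hA : ∀ x t, A *ᵥ Sum.elim x (fun _ => t) = Sum.elim (B *ᵥ x - t • b) fun _ => t :=
    fun x t => by ext (i | i) <;> simp [A, mulVec, dotProduct, sub_eq_add_neg, mul_comm]
  have hAt : ∀ v, v ᵥ* A = Sum.elim (v ∘ Sum.inl ᵥ* B)
      fun _ => v (Sum.inr ()) - b ⬝ᵥ (v ∘ Sum.inl) := fun v => by
    ext (i | i) <;> simp [A, vecMul, dotProduct, sub_eq_add_neg, mul_comm, add_comm]
  obtain ⟨v, hv, hvA⟩ :=
      exists_nonneg_vecMul_eq_of_forall_nonneg A (Sum.elim c fun _ => -α) fun y hy => by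
    obtain ⟨x, t, rfl⟩ : ∃ x t, y = Sum.elim x fun _ => t :=
      ⟨y ∘ Sum.inl, y (Sum.inr ()), by ext (i | i) <;> rfl⟩
    rw [hA] at hy
    have : t * α ≤ c ⬝ᵥ x := mul_le_dotProduct_of_smul_le_mulVec hfeas hbound (hy (Sum.inr ()))
      fun i => sub_nonneg.1 (hy (Sum.inl i))
    rw [sumElim_dotProduct_sumElim, dotProduct_pUnit]
    linarith
  refine ⟨v ∘ Sum.inl, fun i => hv _, ?_, ?_⟩
  · simpa [hAt] using congrArg (· ∘ Sum.inl) hvA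
  · have := congrFun hvA (Sum.inr ())
    simp only [hAt, Sum.elim_inr] at this
    linarith [show 0 ≤ v (Sum.inr ()) from hv _]

lemma nonneg_transpose_mulVec_of_forall_le {m p : Type*} [Fintype m] [Fintype p]
    [DecidableEq p] {Y : Matrix m p ℝ} {w : m → ℝ} {a : ℝ}
    (h : ∀ lam, 0 ≤ lam → a ≤ w ⬝ᵥ Y *ᵥ lam) : 0 ≤ Yᵀ *ᵥ w := fun j =>
  nonneg_of_forall_le_mul fun t ht => by
    have hcol : w ⬝ᵥ Y *ᵥ (t • Pi.single j 1) = t * (Yᵀ *ᵥ w) j := by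
      rw [mulVec_smul, dotProduct_smul, mulVec_single_one, dotProduct_comm, smul_eq_mul]; rfl
    exact hcol ▸ h _ (smul_nonneg ht (by simp))

end Matrix

/-- The vector `w(y*)` of the paper, for which `φ(y, y*) = w(y*) ⬝ y - y*_q`. -/
def couplingWeight (q : ℕ) (c ystar : Fin (q + 1) → ℝ) : Fin (q + 1) → ℝ :=
  Function.update ystar (Fin.last q) (1 - ∑ i : Fin q, c i.castSucc * ystar i.castSucc)

lemma phiCoupling_eq (q : ℕ) (c y ystar : Fin (q + 1) → ℝ) :
    phiCoupling q c y ystar = couplingWeight q c ystar ⬝ᵥ y - ystar (Fin.last q) := by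
  simp [phiCoupling, couplingWeight, dotProduct, Fin.sum_univ_castSucc, mul_comm]

lemma dotProduct_couplingWeight {q : ℕ} {c : Fin (q + 1) → ℝ} (hcq : c (Fin.last q) = 1)
    (ystar : Fin (q + 1) → ℝ) : c ⬝ᵥ couplingWeight q c ystar = 1 := by
  simp [couplingWeight, dotProduct, Fin.sum_univ_castSucc, hcq]

lemma update_couplingWeight_sub_smul_single (q : ℕ) (c ystar : Fin (q + 1) → ℝ) (a : ℝ) :
    Function.update (couplingWeight q c ystar) (Fin.last q) a
      - (a - ystar (Fin.last q)) • Pi.single (Fin.last q) 1 = ystar := by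
  ext i
  rcases eq_or_ne i (Fin.last q) with rfl | hi
  · simp
  · simp [couplingWeight, hi]

theorem strong_duality_dual_general
    (q n m p : ℕ)
    (B : Matrix (Fin m) (Fin n) ℝ) (b : Fin m → ℝ) (P : Matrix (Fin (q+1)) (Fin n) ℝ)
    (Y : Matrix (Fin (q+1)) (Fin p) ℝ)
    (C : Set (Fin (q+1) → ℝ))
    (hC : C = {y | ∃ lam : Fin p → ℝ, 0 ≤ lam ∧ y = Y.mulVec lam})
    (c : Fin (q+1) → ℝ) (hcq : c (Fin.last q) = 1)
    (S : Set (Fin n → ℝ)) (hS : S = {x | b ≤ B.mulVec x}) (hSne : S.Nonempty)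
    (UP : Set (Fin (q+1) → ℝ))
    (hUP : UP = {y | ∃ x ∈ S, ∃ k ∈ C, y = P.mulVec x + k})
    (T : Set ((Fin m → ℝ) × (Fin (q+1) → ℝ)))
    (hT : T = {uw | 0 ≤ uw.1 ∧ Bᵀ.mulVec uw.1 = Pᵀ.mulVec uw.2 ∧
      c ⬝ᵥ uw.2 = 1 ∧ 0 ≤ Yᵀ.mulVec uw.2})
    (Dstar : Set (Fin (q+1) → ℝ))
    (hDstar : Dstar = {d | ∃ uw ∈ T, ∃ k : ℝ, 0 ≤ k ∧
      d = Function.update uw.2 (Fin.last q) (b ⬝ᵥ uw.1) - k • (Pi.single (Fin.last q) 1 : Fin (q+1) → ℝ)})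
    (ystar : Fin (q+1) → ℝ)
    (hystar : ∀ y ∈ UP, 0 ≤ phiCoupling q c y ystar) :
    ystar ∈ Dstar := by
  subst hC hS hUP hT hDstar
  set w := couplingWeight q c ystar
  have hw : ∀ x, b ≤ B *ᵥ x → ∀ lam, 0 ≤ lam → ystar (Fin.last q) ≤ w ⬝ᵥ (P *ᵥ x + Y *ᵥ lam) :=
    fun x hx lam hlam => by
      simpa [phiCoupling_eq] using hystar _ ⟨x, hx, _, ⟨lam, hlam, rfl⟩, rfl⟩
  obtain ⟨x₀, hx₀⟩ := hSne
  have hYw : 0 ≤ Yᵀ *ᵥ w := nonneg_transpose_mulVec_of_forall_le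
    (a := ystar (Fin.last q) - w ⬝ᵥ P *ᵥ x₀) fun lam hlam => by
      linarith [dotProduct_add w (P *ᵥ x₀) (Y *ᵥ lam) ▸ hw x₀ hx₀ lam hlam]
  obtain ⟨u, hu, huB, hub⟩ := exists_nonneg_vecMul_eq_le_dotProduct (c := w ᵥ* P) ⟨x₀, hx₀⟩
    fun x hx => by simpa [dotProduct_mulVec] using hw x hx 0 le_rfl
  refine ⟨(u, w), ⟨hu, by simp [mulVec_transpose, huB], dotProduct_couplingWeight hcq ystar, hYw⟩,
    b ⬝ᵥ u - ystar (Fin.last q), by linarith, ?_⟩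
  exact (update_couplingWeight_sub_smul_single q c ystar _).symm

/-- Strong duality, dual part: if φ(y, y*) ≥ 0 for all y ∈ 𝒫, then y* ∈ 𝒟*. -/
theorem strong_duality_dual
    (q n m p : ℕ)
    (B : Matrix (Fin m) (Fin n) ℝ) (b : Fin m → ℝ) (P : Matrix (Fin (q+1)) (Fin n) ℝ)
    (Y : Matrix (Fin (q+1)) (Fin p) ℝ)
    (C : Set (Fin (q+1) → ℝ))
    (hC : C = {y | ∃ lam : Fin p → ℝ, 0 ≤ lam ∧ y = Y.mulVec lam})
    (hCpointed : ∀ x ∈ C, -x ∈ C → x = 0)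
    (c : Fin (q+1) → ℝ) (hc : c ∈ interior C) (hcq : c (Fin.last q) = 1)
    (S : Set (Fin n → ℝ)) (hS : S = {x | b ≤ B.mulVec x}) (hSne : S.Nonempty)
    (UP : Set (Fin (q+1) → ℝ))
    (hUP : UP = {y | ∃ x ∈ S, ∃ k ∈ C, y = P.mulVec x + k})
    (T : Set ((Fin m → ℝ) × (Fin (q+1) → ℝ)))
    (hT : T = {uw | 0 ≤ uw.1 ∧ Bᵀ.mulVec uw.1 = Pᵀ.mulVec uw.2 ∧
      c ⬝ᵥ uw.2 = 1 ∧ 0 ≤ Yᵀ.mulVec uw.2})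
    (hTne : T.Nonempty)
    (Dstar : Set (Fin (q+1) → ℝ))
    (hDstar : Dstar = {d | ∃ uw ∈ T, ∃ k : ℝ, 0 ≤ k ∧
      d = Function.update uw.2 (Fin.last q) (b ⬝ᵥ uw.1) - k • (Pi.single (Fin.last q) 1 : Fin (q+1) → ℝ)})
    (ystar : Fin (q+1) → ℝ)
    (hystar : ∀ y ∈ UP, 0 ≤ phiCoupling q c y ystar) :
    ystar ∈ Dstar :=
  strong_duality_dual_general q n m p B b P Y C hC c hcq S hS hSne UP hUP T hT Dstar hDstar ystar
    hystar
end

section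
/- Let S = {x : Bx ≥ b} ≠ ∅ and let t* ∈ Δ := {y* ∈ ℝ^q : w(y*) ∈ (𝒫^h)^+}, where 𝒫^h = P[S^h] + C with S^h = {x : Bx ≥ 0}. Set w = w(t*). Then the scalarized problem P₁(w): min w^T Px subject to Bx ≥ b has an optimal solution. -/
open Matrix

/-- w(y*) = (y*_1, …, y*_{q-1}, 1 - Σ_{i<q} c_i y*_i). -/
def wOf (q : ℕ) (c ystar : Fin (q + 1) → ℝ) : Fin (q + 1) → ℝ :=
  Function.update ystar (Fin.last q) (1 - ∑ i : Fin q, c i.castSucc * ystar i.castSucc)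

/-!
Since `0 ∈ C`, every `P d` with `B d ≥ 0` lies in `𝒫ʰ`, so the objective `a = wᵀ P` is
nonnegative on the recession cone `{d | B d ≥ 0}` of `S`. The right-hand sides `(y, t)` for which
`B x ≥ y, aᵀ x ≤ t` is feasible form a linear image of a finitely generated cone, which is closed
by Carathéodory's theorem for cones. If the objective were unbounded below on `S`, closedness would
produce a direction `d` with `B d ≥ 0` and `aᵀ d < 0`. Hence `{t | ∃ x ∈ S, aᵀ x ≤ t}` is closed,
nonempty and bounded below, and so contains its infimum.
-/

open Finset Filter Topology

section Caratheodory

variable {ι E : Type*} [AddCommGroup E] [Module ℝ E]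

theorem exists_erase_eq_sum_of_not_linearIndepOn [DecidableEq ι] {v : ι → E} {t : Finset ι}
    (hv : ¬LinearIndepOn ℝ v t) {l : ι → ℝ} (hl : ∀ i ∈ t, 0 ≤ l i) :
    ∃ i₀ ∈ t, ∃ l' : ι → ℝ, (∀ i ∈ t.erase i₀, 0 ≤ l' i) ∧
      ∑ i ∈ t.erase i₀, l' i • v i = ∑ i ∈ t, l i • v i := by
  obtain ⟨g, hg, i₁, hi₁, hgi₁⟩ : ∃ g : ι → ℝ, ∑ i ∈ t, g i • v i = 0 ∧ ∃ i ∈ t, 0 < g i := by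
    obtain ⟨g, hg, i, hi, hgi⟩ := not_linearIndepOn_finset_iff.1 hv
    rcases hgi.lt_or_gt with hneg | hpos
    · exact ⟨-g, by simp [neg_smul, sum_neg_distrib, hg], i, hi, by simpa using hneg⟩
    · exact ⟨g, hg, i, hi, hpos⟩
  -- Move from `l` along `-g` until the first coefficient hits zero.
  obtain ⟨i₀, hi₀, hmin⟩ := (t.filter (0 < g ·)).exists_min_image (fun i => l i / g i)
    ⟨i₁, mem_filter.2 ⟨hi₁, hgi₁⟩⟩
  obtain ⟨hi₀t, hgi₀⟩ := mem_filter.1 hi₀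
  set θ := l i₀ / g i₀
  have hθ : 0 ≤ θ := div_nonneg (hl i₀ hi₀t) hgi₀.le
  refine ⟨i₀, hi₀t, fun i => l i - θ * g i, fun i hi => ?_, ?_⟩
  · have hit := mem_of_mem_erase hi
    rcases le_or_gt (g i) 0 with hgi | hgi
    · nlinarith [hl i hit]
    · have := hmin i (mem_filter.2 ⟨hit, hgi⟩)
      rw [le_div_iff₀ hgi] at this
      linarith
  · rw [sum_erase _ (by simp [θ, div_mul_cancel₀ _ hgi₀.ne'])]
    simp only [sub_smul, sum_sub_distrib, mul_smul, ← smul_sum, hg, smul_zero, sub_zero]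

theorem exists_linearIndepOn_eq_sum (v : ι → E) (t : Finset ι) {l : ι → ℝ}
    (hl : ∀ i ∈ t, 0 ≤ l i) :
    ∃ s ⊆ t, LinearIndepOn ℝ v s ∧ ∃ μ : ι → ℝ, (∀ i ∈ s, 0 ≤ μ i) ∧
      ∑ i ∈ s, μ i • v i = ∑ i ∈ t, l i • v i := by
  classical
  induction t using Finset.strongInduction generalizing l with
  | H t ih =>
    by_cases hv : LinearIndepOn ℝ v t
    · exact ⟨t, subset_rfl, hv, l, hl, rfl⟩
    obtain ⟨i₀, hi₀, l', hl', hsum⟩ := exists_erase_eq_sum_of_not_linearIndepOn hv hl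
    obtain ⟨s, hs, hsv, μ, hμ, hμsum⟩ := ih _ (erase_ssubset hi₀) hl'
    exact ⟨s, hs.trans (erase_subset _ _), hsv, μ, hμ, hμsum.trans hsum⟩

end Caratheodory

section ClosedCone

variable {ι E : Type*} [Fintype ι] [AddCommGroup E] [Module ℝ E] [TopologicalSpace E]
  [IsTopologicalAddGroup E] [ContinuousSMul ℝ E] [T2Space E]

theorem LinearIndependent.isClosed_image_Ici {v : ι → E} (hv : LinearIndependent ℝ v) :
    IsClosed (Fintype.linearCombination ℝ v '' Set.Ici 0) :=
  (LinearMap.isClosedEmbedding_of_injective (LinearMap.ker_eq_bot.2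
    (linearIndependent_iff_injective_fintypeLinearCombination.1 hv))).isClosedMap _ isClosed_Ici

theorem isClosed_image_Ici_fintypeLinearCombination (v : ι → E) :
    IsClosed (Fintype.linearCombination ℝ v '' Set.Ici 0) := by
  classical
  suffices Fintype.linearCombination ℝ v '' Set.Ici 0 = ⋃ (s : Finset ι) (_ : LinearIndepOn ℝ v s),
      Fintype.linearCombination ℝ (fun i : s => v i) '' Set.Ici 0 by
    rw [this]
    exact isClosed_iUnion_of_finite fun s =>
      isClosed_iUnion_of_finite fun hs => hs.isClosed_image_Ici
  ext x
  simp only [Set.mem_image, Set.mem_iUnion, Set.mem_Ici, Fintype.linearCombination_apply]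
  constructor
  · rintro ⟨l, hl, rfl⟩
    obtain ⟨s, -, hs, μ, hμ, hsum⟩ := exists_linearIndepOn_eq_sum v univ fun i _ => hl i
    exact ⟨s, hs, fun i => μ i, fun i => hμ i i.2, by rw [sum_coe_sort s fun i => μ i • v i, hsum]⟩
  · rintro ⟨s, -, μ, hμ, rfl⟩
    refine ⟨fun i => if h : i ∈ s then μ ⟨i, h⟩ else 0, fun i => ?_, ?_⟩
    · by_cases h : i ∈ s
      · simpa [h] using hμ ⟨i, h⟩
      · simp [h]
    · simp only [dite_smul, zero_smul, univ_eq_attach]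
      exact (sum_attach_eq_sum_dite s fun i => μ i • v i).symm

theorem LinearMap.isClosed_image_Ici (L : (ι → ℝ) →ₗ[ℝ] E) : IsClosed (L '' Set.Ici 0) := by
  classical
  have hL : Fintype.linearCombination ℝ (fun i => L (Pi.single i 1)) = L := by
    ext i
    simp [Fintype.linearCombination_apply_single]
  simpa only [hL] using isClosed_image_Ici_fintypeLinearCombination fun i => L (Pi.single i 1)

end ClosedCone

theorem Matrix.isClosed_setOf_exists_le_mulVec {κ ι : Type*} [Fintype κ] [Fintype ι]
    (M : Matrix κ ι ℝ) : IsClosed {y : κ → ℝ | ∃ x, y ≤ M *ᵥ x} := by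
  -- Write `x = x⁺ - x⁻` and `y = M *ᵥ x - s` with `x⁺, x⁻, s ≥ 0`.
  let L : (ι ⊕ ι ⊕ κ → ℝ) →ₗ[ℝ] κ → ℝ :=
    M.mulVecLin ∘ₗ (LinearMap.funLeft ℝ ℝ Sum.inl - LinearMap.funLeft ℝ ℝ (Sum.inr ∘ Sum.inl)) -
      LinearMap.funLeft ℝ ℝ (Sum.inr ∘ Sum.inr)
  convert L.isClosed_image_Ici using 1
  ext y
  constructor
  · rintro ⟨x, hx⟩
    refine ⟨Sum.elim x⁺ (Sum.elim x⁻ (M *ᵥ x - y)), ?_, ?_⟩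
    · rw [Set.mem_Ici, ← Sum.elim_zero_zero, ← Sum.elim_zero_zero, Sum.elim_le_elim_iff,
        Sum.elim_le_elim_iff]
      exact ⟨posPart_nonneg x, negPart_nonneg x, sub_nonneg.2 hx⟩
    · change M *ᵥ (x⁺ - x⁻) - (M *ᵥ x - y) = y
      rw [posPart_sub_negPart, sub_sub_cancel]
  · rintro ⟨z, hz, rfl⟩
    exact ⟨z ∘ Sum.inl - z ∘ Sum.inr ∘ Sum.inl, sub_le_self _ fun k => hz _⟩

theorem IsClosed.mem_of_forall_add_smul_mem {E : Type*} [AddCommGroup E] [Module ℝ E]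
    [TopologicalSpace E] [ContinuousAdd E] [ContinuousSMul ℝ E] {V : Set E} (hV : IsClosed V)
    (hsmul : ∀ c : ℝ, 0 < c → ∀ y ∈ V, c • y ∈ V) {x d : E}
    (h : ∀ t : ℝ, 0 < t → x + t • d ∈ V) : d ∈ V := by
  have hlim : Tendsto (fun t : ℝ => t⁻¹ • x + d) atTop (𝓝 d) := by
    simpa using ((tendsto_inv_atTop_zero (𝕜 := ℝ)).smul_const x).add_const d
  refine hV.mem_of_tendsto hlim ((eventually_gt_atTop 0).mono fun t ht => ?_)
  have := hsmul t⁻¹ (inv_pos.2 ht) _ (h t ht)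
  rwa [smul_add, smul_smul, inv_mul_cancel₀ ht.ne', one_smul] at this

theorem Matrix.exists_isMinOn_dotProduct_of_recessionCone_nonneg {κ ι : Type*} [Fintype κ]
    [Fintype ι] (B : Matrix κ ι ℝ) (b : κ → ℝ) (a : ι → ℝ) (hne : {x | b ≤ B *ᵥ x}.Nonempty)
    (hrec : ∀ d, 0 ≤ B *ᵥ d → 0 ≤ a ⬝ᵥ d) :
    ∃ xbar ∈ {x | b ≤ B *ᵥ x}, IsMinOn (a ⬝ᵥ ·) {x | b ≤ B *ᵥ x} xbar := by
  set S := {x | b ≤ B *ᵥ x}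
  set M : Matrix (κ ⊕ Unit) ι ℝ := B.fromRows (of fun _ => -a)
  have hM (y : κ → ℝ) (s : ℝ) (x : ι → ℝ) :
      Sum.elim y (fun _ => s) ≤ M *ᵥ x ↔ y ≤ B *ᵥ x ∧ a ⬝ᵥ x ≤ -s := by
    rw [fromRows_mulVec, Sum.elim_le_elim_iff]
    refine and_congr_right' ?_
    change (∀ _ : Unit, s ≤ -a ⬝ᵥ x) ↔ _
    simp only [forall_const, neg_dotProduct, le_neg]
  set R := {y : κ ⊕ Unit → ℝ | ∃ x, y ≤ M *ᵥ x}
  have hR : IsClosed R := M.isClosed_setOf_exists_le_mulVec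
  have hRsmul : ∀ c : ℝ, 0 < c → ∀ y ∈ R, c • y ∈ R := fun c hc y ⟨x, hx⟩ =>
    ⟨c • x, by simpa [mulVec_smul] using smul_le_smul_of_nonneg_left hx hc.le⟩
  set T := {t : ℝ | ∃ x ∈ S, a ⬝ᵥ x ≤ t}
  have hT : T = (fun t => Sum.elim b fun _ => -t) ⁻¹' R := by
    ext t
    simp [T, S, R, hM]
  have hTclosed : IsClosed T := by
    rw [hT]
    refine hR.preimage (continuous_pi fun k => ?_)
    rcases k with k | k <;> simp only [Sum.elim_inl, Sum.elim_inr] <;> fun_prop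
  have hTne : T.Nonempty := let ⟨x, hx⟩ := hne; ⟨a ⬝ᵥ x, x, hx, le_rfl⟩
  have hTbdd : BddBelow T := by
    by_contra hunb
    have hall (t : ℝ) : t ∈ T := by
      obtain ⟨t', ⟨x, hx, hxt'⟩, ht'⟩ := not_bddBelow_iff.1 hunb t
      exact ⟨x, hx, hxt'.trans ht'.le⟩
    have hdir : (Sum.elim 0 fun _ => 1 : κ ⊕ Unit → ℝ) ∈ R := by
      refine hR.mem_of_forall_add_smul_mem hRsmul (x := Sum.elim b 0) fun t ht => ?_
      have h := hall (-t)
      rw [hT, Set.mem_preimage] at h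
      convert h using 1
      ext (k | k) <;> simp
    obtain ⟨d, hd⟩ := hdir
    obtain ⟨hd0, hda⟩ := (hM 0 1 d).1 hd
    linarith [hrec d hd0]
  obtain ⟨xbar, hxbar, hxbar_le⟩ := hTclosed.csInf_mem hTne hTbdd
  exact ⟨xbar, hxbar, fun x hx => hxbar_le.trans (csInf_le hTbdd ⟨x, hx, le_rfl⟩)⟩

theorem P1_has_optimal_solution_general
    (q n m p : ℕ)
    (B : Matrix (Fin m) (Fin n) ℝ) (b : Fin m → ℝ) (P : Matrix (Fin (q+1)) (Fin n) ℝ)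
    (Y : Matrix (Fin (q+1)) (Fin p) ℝ)
    (C : Set (Fin (q+1) → ℝ))
    (hC : C = {y | ∃ lam : Fin p → ℝ, 0 ≤ lam ∧ y = Y.mulVec lam})
    (c : Fin (q+1) → ℝ)
    (S : Set (Fin n → ℝ)) (hS : S = {x | b ≤ B.mulVec x}) (hSne : S.Nonempty)
    (Ph : Set (Fin (q+1) → ℝ))
    (hPh : Ph = {y | ∃ x : Fin n → ℝ, 0 ≤ B.mulVec x ∧ ∃ k ∈ C, y = P.mulVec x + k})
    (tstar : Fin (q+1) → ℝ)
    (htstar : ∀ y ∈ Ph, 0 ≤ wOf q c tstar ⬝ᵥ y) :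
    ∃ xbar ∈ S, ∀ x ∈ S,
      wOf q c tstar ⬝ᵥ P.mulVec xbar ≤ wOf q c tstar ⬝ᵥ P.mulVec x := by
  set w := wOf q c tstar
  have hzero : (0 : Fin (q+1) → ℝ) ∈ C := hC ▸ ⟨0, le_rfl, (mulVec_zero Y).symm⟩
  have hrec (d : Fin n → ℝ) (hd : 0 ≤ B *ᵥ d) : 0 ≤ w ᵥ* P ⬝ᵥ d := by
    rw [← dotProduct_mulVec]
    exact htstar _ (hPh ▸ ⟨d, hd, 0, hzero, (add_zero _).symm⟩)
  subst hS
  obtain ⟨xbar, hxbar, hmin⟩ :=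
    B.exists_isMinOn_dotProduct_of_recessionCone_nonneg b (w ᵥ* P) hSne hrec
  refine ⟨xbar, hxbar, fun x hx => ?_⟩
  simpa only [dotProduct_mulVec] using isMinOn_iff.1 hmin x hx

/-- If S ≠ ∅ and t* ∈ Δ = {y* : w(y*) ∈ (𝒫ʰ)⁺}, then the scalarized problem
P₁(w(t*)): min w(t*)ᵀ P x s.t. Bx ≥ b has an optimal solution. -/
theorem P1_has_optimal_solution
    (q n m p : ℕ)
    (B : Matrix (Fin m) (Fin n) ℝ) (b : Fin m → ℝ) (P : Matrix (Fin (q+1)) (Fin n) ℝ)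
    (Y : Matrix (Fin (q+1)) (Fin p) ℝ)
    (C : Set (Fin (q+1) → ℝ))
    (hC : C = {y | ∃ lam : Fin p → ℝ, 0 ≤ lam ∧ y = Y.mulVec lam})
    (hCpointed : ∀ x ∈ C, -x ∈ C → x = 0)
    (c : Fin (q+1) → ℝ) (hc : c ∈ interior C) (hcq : c (Fin.last q) = 1)
    (S : Set (Fin n → ℝ)) (hS : S = {x | b ≤ B.mulVec x}) (hSne : S.Nonempty)
    (Ph : Set (Fin (q+1) → ℝ))
    (hPh : Ph = {y | ∃ x : Fin n → ℝ, 0 ≤ B.mulVec x ∧ ∃ k ∈ C, y = P.mulVec x + k})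
    (tstar : Fin (q+1) → ℝ)
    (htstar : ∀ y ∈ Ph, 0 ≤ wOf q c tstar ⬝ᵥ y) :
    ∃ xbar ∈ S, ∀ x ∈ S,
      wOf q c tstar ⬝ᵥ P.mulVec xbar ≤ wOf q c tstar ⬝ᵥ P.mulVec x :=
  P1_has_optimal_solution_general q n m p B b P Y C hC c S hS hSne Ph hPh tstar htstar
end

section
/- Let S ≠ ∅, t* ∈ Δ = {y* : w(y*) ∈ (𝒫^h)^+}, w = w(t*), and let x̄ be an optimal solution of P₁(w): min w^T Px s.t. Bx ≥ b. Define s* = (t*_1,…,t*_{q-1}, w^T P x̄). Then s* is a K-maximal point of 𝒟* = D*[T] - K, and the hyperplane H*(Px̄) = {y* : φ(Px̄, y*) = 0} is a supporting hyperplane of 𝒟* containing s*. Moreover, t* ∉ 𝒟* iff w^T P x̄ < t*_q, and t* is K-maximal in 𝒟* iff w^T P x̄ = t*_q. -/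
open Matrix

lemma exists_castSucc_of_ne_last {q : ℕ} (i : Fin (q+1)) (hi : i ≠ Fin.last q) :
    ∃ j : Fin q, i = j.castSucc :=
  ⟨i.castPred hi, (Fin.castSucc_castPred i hi).symm⟩

/-- Given t* ∈ Δ and an optimal solution x̄ of P₁(w(t*)), the point
s* = (t*_1,…,t*_{q-1}, wᵀPx̄) is K-maximal in 𝒟*, the hyperplane H*(Px̄) supports 𝒟*
and contains s*, and t* ∉ 𝒟* iff wᵀPx̄ < t*_q, while t* is K-maximal in 𝒟* iff
wᵀPx̄ = t*_q. -/
theorem dual_cut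
    (q n m p : ℕ)
    (B : Matrix (Fin m) (Fin n) ℝ) (b : Fin m → ℝ) (P : Matrix (Fin (q+1)) (Fin n) ℝ)
    (Y : Matrix (Fin (q+1)) (Fin p) ℝ)
    (C : Set (Fin (q+1) → ℝ))
    (hC : C = {y | ∃ lam : Fin p → ℝ, 0 ≤ lam ∧ y = Y.mulVec lam})
    (hCpointed : ∀ x ∈ C, -x ∈ C → x = 0)
    (c : Fin (q+1) → ℝ) (hc : c ∈ interior C) (hcq : c (Fin.last q) = 1)
    (S : Set (Fin n → ℝ)) (hS : S = {x | b ≤ B.mulVec x}) (hSne : S.Nonempty)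
    (T : Set ((Fin m → ℝ) × (Fin (q+1) → ℝ)))
    (hT : T = {uw | 0 ≤ uw.1 ∧ Bᵀ.mulVec uw.1 = Pᵀ.mulVec uw.2 ∧
      c ⬝ᵥ uw.2 = 1 ∧ 0 ≤ Yᵀ.mulVec uw.2})
    (Dstar : Set (Fin (q+1) → ℝ))
    (hDstar : Dstar = {d | ∃ uw ∈ T, ∃ k : ℝ, 0 ≤ k ∧
      d = Function.update uw.2 (Fin.last q) (b ⬝ᵥ uw.1)
        - k • (Pi.single (Fin.last q) 1 : Fin (q+1) → ℝ)})
    (Ph : Set (Fin (q+1) → ℝ))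
    (hPh : Ph = {y | ∃ x : Fin n → ℝ, 0 ≤ B.mulVec x ∧ ∃ k ∈ C, y = P.mulVec x + k})
    (tstar : Fin (q+1) → ℝ)
    (htstar : ∀ y ∈ Ph, 0 ≤ wOf q c tstar ⬝ᵥ y)
    (xbar : Fin n → ℝ) (hxbar : xbar ∈ S)
    (hopt : ∀ x ∈ S, wOf q c tstar ⬝ᵥ P.mulVec xbar ≤ wOf q c tstar ⬝ᵥ P.mulVec x)
    -- LP strong duality between P₁(w) and D₁(w) may be assumed:
    (hdual : ∃ u : Fin m → ℝ, 0 ≤ u ∧ Bᵀ.mulVec u = Pᵀ.mulVec (wOf q c tstar) ∧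
      b ⬝ᵥ u = wOf q c tstar ⬝ᵥ P.mulVec xbar) :
    (Function.update tstar (Fin.last q) (wOf q c tstar ⬝ᵥ P.mulVec xbar) ∈ Dstar ∧
      ∀ k : ℝ, 0 < k →
        Function.update tstar (Fin.last q) (wOf q c tstar ⬝ᵥ P.mulVec xbar)
          + k • (Pi.single (Fin.last q) 1 : Fin (q+1) → ℝ) ∉ Dstar) ∧
    (∀ ystar ∈ Dstar, 0 ≤ phiCoupling q c (P.mulVec xbar) ystar) ∧
    phiCoupling q c (P.mulVec xbar)
      (Function.update tstar (Fin.last q) (wOf q c tstar ⬝ᵥ P.mulVec xbar)) = 0 ∧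
    (tstar ∉ Dstar ↔ wOf q c tstar ⬝ᵥ P.mulVec xbar < tstar (Fin.last q)) ∧
    ((tstar ∈ Dstar ∧ ∀ k : ℝ, 0 < k →
        tstar + k • (Pi.single (Fin.last q) 1 : Fin (q+1) → ℝ) ∉ Dstar) ↔
      wOf q c tstar ⬝ᵥ P.mulVec xbar = tstar (Fin.last q)) := by

  obtain ⟨u, hu, huB, hub⟩ := hdual
  set w := wOf q c tstar with hw
  have hbx : b ≤ B.mulVec xbar := by rw [hS] at hxbar; exact hxbar
  have hwi : ∀ i : Fin q, w i.castSucc = tstar i.castSucc := fun i =>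
    Function.update_of_ne (Fin.castSucc_lt_last i).ne _ _
  have hwlast : w (Fin.last q) = 1 - ∑ i : Fin q, c i.castSucc * tstar i.castSucc :=
    Function.update_self _ _ _
  have hcw : c ⬝ᵥ w = 1 := by
    simp only [dotProduct, Fin.sum_univ_castSucc, hwi, hwlast, hcq]
    ring
  have hYw : (0 : Fin p → ℝ) ≤ Yᵀ.mulVec w := by
    intro j
    have h1 : Y.mulVec (Pi.single j 1) ∈ Ph := by
      rw [hPh]
      refine ⟨0, by simp [Matrix.mulVec_zero], Y.mulVec (Pi.single j 1), ?_, by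
        simp [Matrix.mulVec_zero]⟩
      rw [hC]
      exact ⟨Pi.single j 1, le_update_iff.mpr ⟨zero_le_one, fun _ _ => le_rfl⟩, rfl⟩
    have h2 := htstar _ h1
    have h3 : w ⬝ᵥ Y.mulVec (Pi.single j 1) = Yᵀ.mulVec w j := by
      rw [Matrix.dotProduct_mulVec, ← Matrix.mulVec_transpose]
      simp [dotProduct, Pi.single_apply, mul_ite]
    rw [← h3]; exact h2
  -- weak duality
  have hweak : ∀ (u' : Fin m → ℝ) (w' : Fin (q+1) → ℝ), 0 ≤ u' →
      Bᵀ.mulVec u' = Pᵀ.mulVec w' → b ⬝ᵥ u' ≤ w' ⬝ᵥ P.mulVec xbar := by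
    intro u' w' hu' heq
    have h1 : b ⬝ᵥ u' ≤ B.mulVec xbar ⬝ᵥ u' :=
      Finset.sum_le_sum fun i _ => mul_le_mul_of_nonneg_right (hbx i) (hu' i)
    calc b ⬝ᵥ u' ≤ B.mulVec xbar ⬝ᵥ u' := h1
      _ = u' ⬝ᵥ B.mulVec xbar := dotProduct_comm _ _
      _ = Bᵀ.mulVec u' ⬝ᵥ xbar := by
          rw [Matrix.dotProduct_mulVec, Matrix.mulVec_transpose]
      _ = Pᵀ.mulVec w' ⬝ᵥ xbar := by rw [heq]
      _ = w' ⬝ᵥ P.mulVec xbar := by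
          rw [Matrix.dotProduct_mulVec, Matrix.mulVec_transpose]
  -- structure of points of Dstar
  have hDkey : ∀ d ∈ Dstar, d (Fin.last q) ≤ wOf q c d ⬝ᵥ P.mulVec xbar := by
    intro d hd
    rw [hDstar] at hd
    obtain ⟨⟨u', w'⟩, hTmem, k', hk', hdef⟩ := hd
    rw [hT] at hTmem
    obtain ⟨hu', heq, hcw', hYw'⟩ := hTmem
    have hdic : ∀ i : Fin q, d i.castSucc = w' i.castSucc := by
      intro i
      rw [hdef]
      simp [Function.update_of_ne (Fin.castSucc_lt_last i).ne,
        Pi.single_eq_of_ne (Fin.castSucc_lt_last i).ne]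
    have hdlast : d (Fin.last q) = b ⬝ᵥ u' - k' := by
      rw [hdef]; simp
    have hw'last : w' (Fin.last q) = 1 - ∑ i : Fin q, c i.castSucc * w' i.castSucc := by
      have : (∑ i : Fin q, c i.castSucc * w' i.castSucc) + w' (Fin.last q) = 1 := by
        rw [← hcw']
        simp [dotProduct, Fin.sum_univ_castSucc, hcq]
      linarith
    have hwd : wOf q c d = w' := by
      funext i
      rcases eq_or_ne i (Fin.last q) with hi | hi
      · subst hi
        rw [wOf, Function.update_self, hw'last]
        congr 1
        exact Finset.sum_congr rfl fun i _ => by rw [hdic i]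
      · rw [wOf, Function.update_of_ne hi]
        obtain ⟨j, rfl⟩ := exists_castSucc_of_ne_last i hi
        exact hdic j
    rw [hwd, hdlast]
    have := hweak u' w' hu' heq
    linarith
  -- membership lemma
  have hmem : ∀ r : ℝ, r ≤ w ⬝ᵥ P.mulVec xbar →
      Function.update tstar (Fin.last q) r ∈ Dstar := by
    intro r hr
    rw [hDstar]
    refine ⟨(u, w), by rw [hT]; exact ⟨hu, huB, hcw, hYw⟩,
      w ⬝ᵥ P.mulVec xbar - r, by linarith, ?_⟩
    funext i
    rcases eq_or_ne i (Fin.last q) with hi | hi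
    · subst hi
      simp only [Function.update_self, Pi.sub_apply, Pi.smul_apply,
        Pi.single_eq_same, smul_eq_mul, mul_one]
      rw [hub]; ring
    · simp only [Function.update_of_ne hi, Pi.sub_apply, Pi.smul_apply,
        Pi.single_eq_of_ne hi, smul_eq_mul, mul_zero, sub_zero]
      obtain ⟨j, rfl⟩ := exists_castSucc_of_ne_last i hi
      exact (hwi j).symm
  -- phi in terms of wOf
  have hphi : ∀ d : Fin (q+1) → ℝ,
      phiCoupling q c (P.mulVec xbar) d = wOf q c d ⬝ᵥ P.mulVec xbar - d (Fin.last q) := by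
    intro d
    have hwc : ∀ i : Fin q, wOf q c d i.castSucc = d i.castSucc := fun i =>
      Function.update_of_ne (Fin.castSucc_lt_last i).ne _ _
    have h1 : wOf q c d ⬝ᵥ P.mulVec xbar =
        (∑ i : Fin q, P.mulVec xbar i.castSucc * d i.castSucc)
        + P.mulVec xbar (Fin.last q) * (1 - ∑ i : Fin q, c i.castSucc * d i.castSucc) := by
      rw [dotProduct, Fin.sum_univ_castSucc]
      rw [show wOf q c d (Fin.last q)
          = 1 - ∑ i : Fin q, c i.castSucc * d i.castSucc from Function.update_self _ _ _]
      rw [Finset.sum_congr rfl (fun (i : Fin q) (_ : i ∈ Finset.univ) =>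
        show wOf q c d i.castSucc * P.mulVec xbar i.castSucc
          = P.mulVec xbar i.castSucc * d i.castSucc by rw [hwc i]; ring)]
      ring
    rw [phiCoupling, h1]
    try ring
  -- wOf agrees when first coordinates agree
  have hagree : ∀ d : Fin (q+1) → ℝ,
      (∀ i : Fin q, d i.castSucc = tstar i.castSucc) → wOf q c d = w := by
    intro d hdi
    funext i
    rcases eq_or_ne i (Fin.last q) with hi | hi
    · subst hi
      rw [wOf, Function.update_self, hwlast]
      congr 1
      exact Finset.sum_congr rfl fun i _ => by rw [hdi i]
    · rw [wOf, Function.update_of_ne hi]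
      obtain ⟨j, rfl⟩ := exists_castSucc_of_ne_last i hi
      rw [hdi j, hwi j]
    -- done
  set v := w ⬝ᵥ P.mulVec xbar with hv
  have hslast : Function.update tstar (Fin.last q) v (Fin.last q) = v :=
    Function.update_self _ _ _
  refine ⟨⟨hmem v le_rfl, ?_⟩, ?_, ?_, ?_, ?_⟩
  · intro k hk hdmem
    have h1 := hDkey _ hdmem
    have hco : ∀ i : Fin q,
        (Function.update tstar (Fin.last q) v
          + k • (Pi.single (Fin.last q) 1 : Fin (q+1) → ℝ)) i.castSucc = tstar i.castSucc := by
      intro i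
      simp [Function.update_of_ne (Fin.castSucc_lt_last i).ne,
        Pi.single_eq_of_ne (Fin.castSucc_lt_last i).ne]
    have hlastco : (Function.update tstar (Fin.last q) v
        + k • (Pi.single (Fin.last q) 1 : Fin (q+1) → ℝ)) (Fin.last q) = v + k := by
      simp [hslast]
    rw [hagree _ hco, hlastco] at h1
    linarith
  · intro d hd
    rw [hphi]
    have := hDkey d hd
    linarith
  · rw [hphi, hagree _ (fun i => Function.update_of_ne (Fin.castSucc_lt_last i).ne _ _),
      hslast]
    ring
  · constructor
    · intro hnot
      by_contra hge
      push_neg at hge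
      have : Function.update tstar (Fin.last q) (tstar (Fin.last q)) ∈ Dstar :=
        hmem _ hge
      rw [Function.update_eq_self] at this
      exact hnot this
    · intro hlt hmem2
      have := hDkey tstar hmem2
      rw [hagree tstar (fun i => rfl)] at this
      linarith
  · constructor
    · rintro ⟨hin, hmax⟩
      have h1 := hDkey tstar hin
      rw [hagree tstar (fun i => rfl)] at h1
      rcases eq_or_lt_of_le h1 with h2 | h2
      · exact h2.symm
      · exfalso
        refine hmax (v - tstar (Fin.last q)) (by linarith) ?_
        have heq2 : tstar + (v - tstar (Fin.last q)) • (Pi.single (Fin.last q) 1 : Fin (q+1) → ℝ)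
            = Function.update tstar (Fin.last q) v := by
          funext i
          rcases eq_or_ne i (Fin.last q) with hi | hi
          · subst hi; simp
          · simp [Function.update_of_ne hi, Pi.single_eq_of_ne hi]
        rw [heq2]
        exact hmem v le_rfl
    · intro heq
      constructor
      · have := hmem (tstar (Fin.last q)) (le_of_eq heq.symm)
        rwa [Function.update_eq_self] at this
      · intro k hk hdmem
        have h1 := hDkey _ hdmem
        have hco : ∀ i : Fin q,
            (tstar + k • (Pi.single (Fin.last q) 1 : Fin (q+1) → ℝ)) i.castSucc
              = tstar i.castSucc := by
          intro i
          simp [Pi.single_eq_of_ne (Fin.castSucc_lt_last i).ne]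
        have hlastco : (tstar + k • (Pi.single (Fin.last q) 1 : Fin (q+1) → ℝ)) (Fin.last q)
            = tstar (Fin.last q) + k := by simp
        rw [hagree _ hco, hlastco] at h1
        linarith [hv]
end

section
/- Problem (P) is bounded (i.e., there exists y ∈ ℝ^q with P[S] ⊆ {y} + C) if and only if the recession cone of the upper image 𝒫 = P[S] + C equals C, provided S ≠ ∅ and C is a solid pointed polyhedral cone. -/
open Matrix

section FMmach

variable {V : Type*} [AddCommGroup V] [Module ℝ V]

/-- An H-polyhedron: cut out by a finite list of (functional, constant) constraints. -/
def IsHP (s : Set V) : Prop :=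
  ∃ L : List ((V →ₗ[ℝ] ℝ) × ℝ), s = {x | ∀ pr ∈ L, pr.2 ≤ pr.1 x}

lemma le_foldr_max (l : List ℝ) (i : ℝ) : ∀ x ∈ l, x ≤ l.foldr max i := by
  induction l with
  | nil => simp
  | cons a l ih =>
    intro x hx
    rcases List.mem_cons.1 hx with rfl | hx
    · exact le_max_left _ _
    · exact le_trans (ih x hx) (le_max_right _ _)

lemma foldr_max_le (l : List ℝ) (i b : ℝ) (h : ∀ x ∈ l, x ≤ b) (hi : i ≤ b) :
    l.foldr max i ≤ b := by
  induction l with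
  | nil => simpa
  | cons a l ih =>
    simp only [List.foldr_cons]
    exact max_le (h a (by simp)) (ih fun x hx => h x (List.mem_cons_of_mem _ hx))

lemma foldr_min_le (l : List ℝ) (i : ℝ) : ∀ x ∈ l, l.foldr min i ≤ x := by
  induction l with
  | nil => simp
  | cons a l ih =>
    intro x hx
    rcases List.mem_cons.1 hx with rfl | hx
    · exact min_le_left _ _
    · exact le_trans (min_le_right _ _) (ih x hx)

lemma exists_between_lists (lo hi : List ℝ) (h : ∀ a ∈ lo, ∀ b ∈ hi, a ≤ b) :
    ∃ t : ℝ, (∀ a ∈ lo, a ≤ t) ∧ (∀ b ∈ hi, t ≤ b) := by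
  cases lo with
  | nil => exact ⟨hi.foldr min 0, by simp, foldr_min_le hi 0⟩
  | cons a lo' =>
    refine ⟨(a :: lo').foldr max a, le_foldr_max _ _, ?_⟩
    intro bb hb
    exact foldr_max_le _ _ _ (fun x hx => h x hx bb hb) (h a (by simp) bb hb)

/-- Fourier–Motzkin elimination: the projection of an H-polyhedron in `V × ℝ`
to `V` is an H-polyhedron. -/
lemma IsHP.fm {s : Set (V × ℝ)} (h : IsHP s) : IsHP (Prod.fst '' s) := by
  classical
  obtain ⟨L, rfl⟩ := h
  set g : ((V × ℝ) →ₗ[ℝ] ℝ) × ℝ → (V →ₗ[ℝ] ℝ) := fun pr => pr.1.comp (LinearMap.inl ℝ V ℝ)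
    with hg
  set al : ((V × ℝ) →ₗ[ℝ] ℝ) × ℝ → ℝ := fun pr => pr.1 (0, 1) with hal
  have key : ∀ pr : ((V × ℝ) →ₗ[ℝ] ℝ) × ℝ, ∀ x : V, ∀ t : ℝ,
      pr.1 (x, t) = g pr x + t * al pr := by
    intro pr x t
    have hxt : (x, t) = (x, (0 : ℝ)) + t • ((0 : V), (1 : ℝ)) := by
      simp [Prod.ext_iff]
    rw [hxt, map_add, LinearMap.map_smul, smul_eq_mul, hg, hal]
    simp [LinearMap.comp_apply]
  refine ⟨(L.filterMap fun pr => if al pr = 0 then some (g pr, pr.2) else none)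
    ++ ((L.product L).filterMap fun pq =>
        if 0 < al pq.1 ∧ al pq.2 < 0 then
          some (al pq.1 • g pq.2 - al pq.2 • g pq.1, al pq.1 * pq.2.2 - al pq.2 * pq.1.2)
        else none), ?_⟩
  ext x
  simp only [Set.mem_image, Set.mem_setOf_eq]
  constructor
  · rintro ⟨⟨x', t⟩, hxt, rfl⟩
    intro pr hpr
    rcases List.mem_append.1 hpr with hpr | hpr
    · rcases List.mem_filterMap.1 hpr with ⟨p, hp, hsome⟩
      rcases (em (al p = 0)) with h0 | h0
      · rw [if_pos h0] at hsome
        obtain rfl : (g p, p.2) = pr := Option.some.inj hsome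
        have hh := hxt p hp
        rw [key p x' t, h0, mul_zero, add_zero] at hh
        exact hh
      · rw [if_neg h0] at hsome; exact absurd hsome (by simp)
    · rcases List.mem_filterMap.1 hpr with ⟨pq, hpq, hsome⟩
      rcases (em (0 < al pq.1 ∧ al pq.2 < 0)) with hcond | hcond
      · rw [if_pos hcond] at hsome
        obtain rfl : (al pq.1 • g pq.2 - al pq.2 • g pq.1,
            al pq.1 * pq.2.2 - al pq.2 * pq.1.2) = pr := Option.some.inj hsome
        obtain ⟨hp1, hp2⟩ := List.mem_product.1 hpq
        have h1 := hxt pq.1 hp1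
        have h2 := hxt pq.2 hp2
        rw [key pq.1 x' t] at h1
        rw [key pq.2 x' t] at h2
        simp only [LinearMap.sub_apply, LinearMap.smul_apply, smul_eq_mul]
        nlinarith [mul_le_mul_of_nonneg_left h1 (le_of_lt (neg_pos.2 hcond.2)),
          mul_le_mul_of_nonneg_left h2 (le_of_lt hcond.1)]
      · rw [if_neg hcond] at hsome; exact absurd hsome (by simp)
  · intro hx
    set lo := L.filterMap fun pr =>
      if 0 < al pr then some ((pr.2 - g pr x) / al pr) else none with hlo
    set hi := L.filterMap fun pr =>
      if al pr < 0 then some ((pr.2 - g pr x) / al pr) else none with hhi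
    have hord : ∀ a ∈ lo, ∀ bb ∈ hi, a ≤ bb := by
      intro a ha bb hb
      rcases List.mem_filterMap.1 ha with ⟨p, hp, hpa⟩
      rcases (em (0 < al p)) with hP | hP
      swap
      · rw [if_neg hP] at hpa; exact absurd hpa (by simp)
      rw [if_pos hP] at hpa
      obtain rfl : (p.2 - g p x) / al p = a := Option.some.inj hpa
      rcases List.mem_filterMap.1 hb with ⟨qq, hq, hqb⟩
      rcases (em (al qq < 0)) with hQ | hQ
      swap
      · rw [if_neg hQ] at hqb; exact absurd hqb (by simp)
      rw [if_pos hQ] at hqb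
      obtain rfl : (qq.2 - g qq x) / al qq = bb := Option.some.inj hqb
      have hpair := hx _ (List.mem_append.2 (Or.inr (List.mem_filterMap.2
        ⟨(p, qq), List.mem_product.2 ⟨hp, hq⟩, by rw [if_pos ⟨hP, hQ⟩]⟩)))
      simp only [LinearMap.sub_apply, LinearMap.smul_apply, smul_eq_mul] at hpair
      have e1 : (p.2 - g p x) / al p * al p = p.2 - g p x :=
        div_mul_cancel₀ _ (ne_of_gt hP)
      have e2 : (qq.2 - g qq x) / al qq * al qq = qq.2 - g qq x :=
        div_mul_cancel₀ _ (ne_of_lt hQ)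
      nlinarith [mul_pos hP (neg_pos.2 hQ)]
    obtain ⟨t, hlot, hhit⟩ := exists_between_lists lo hi hord
    refine ⟨(x, t), ?_, rfl⟩
    intro pr hpr
    rw [key pr x t]
    rcases lt_trichotomy (al pr) 0 with hneg | h0 | hpos
    · have ht : t ≤ (pr.2 - g pr x) / al pr :=
        hhit _ (List.mem_filterMap.2 ⟨pr, hpr, by rw [if_pos hneg]⟩)
      have := mul_le_mul_of_nonpos_right ht (le_of_lt hneg)
      rw [div_mul_cancel₀ _ (ne_of_lt hneg)] at this
      linarith
    · have hz := hx _ (List.mem_append.2 (Or.inl (List.mem_filterMap.2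
        ⟨pr, hpr, by rw [if_pos h0]⟩)))
      rw [h0, mul_zero, add_zero]
      exact hz
    · have ht : (pr.2 - g pr x) / al pr ≤ t :=
        hlot _ (List.mem_filterMap.2 ⟨pr, hpr, by rw [if_pos hpos]⟩)
      have := mul_le_mul_of_nonneg_right ht (le_of_lt hpos)
      rw [div_mul_cancel₀ _ (ne_of_gt hpos)] at this
      linarith

lemma IsHP.image_equiv {W : Type*} [AddCommGroup W] [Module ℝ W] {s : Set V}
    (h : IsHP s) (e : V ≃ₗ[ℝ] W) : IsHP (e '' s) := by
  obtain ⟨L, rfl⟩ := h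
  refine ⟨L.map fun pr => (pr.1.comp (e.symm : W →ₗ[ℝ] V), pr.2), ?_⟩
  ext y
  simp only [Set.mem_image, Set.mem_setOf_eq, List.mem_map]
  constructor
  · rintro ⟨x, hx, rfl⟩ pr ⟨p, hp, rfl⟩
    simpa using hx p hp
  · intro hy
    exact ⟨e.symm y, fun p hp => by simpa using hy _ ⟨p, hp, rfl⟩, by simp⟩

end FMmach
section Proj

variable {V : Type*} [AddCommGroup V] [Module ℝ V]

/-- Split off the last coordinate. -/
noncomputable def splitE (k : ℕ) : (V × (Fin (k + 1) → ℝ)) ≃ₗ[ℝ] ((V × (Fin k → ℝ)) × ℝ) where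
  toFun z := ((z.1, fun i => z.2 i.castSucc), z.2 (Fin.last k))
  invFun w := (w.1.1, Fin.snoc w.1.2 w.2)
  map_add' _ _ := rfl
  map_smul' _ _ := rfl
  left_inv z := by
    refine Prod.ext rfl ?_
    funext i
    refine Fin.lastCases ?_ (fun j => ?_) i
    · simp
    · simp
  right_inv w := by
    refine Prod.ext (Prod.ext rfl ?_) ?_
    · funext i; simp
    · simp

lemma IsHP.fst_image_pi : ∀ {k : ℕ} {s : Set (V × (Fin k → ℝ))}, IsHP s →
    IsHP (Prod.fst '' s) := by
  intro k
  induction k with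
  | zero =>
    intro s hs
    obtain ⟨L, rfl⟩ := hs
    refine ⟨L.map fun pr => (pr.1.comp (LinearMap.inl ℝ V (Fin 0 → ℝ)), pr.2), ?_⟩
    ext x
    simp only [Set.mem_image, Set.mem_setOf_eq, List.mem_map]
    constructor
    · rintro ⟨⟨x', w⟩, hw, rfl⟩ pr ⟨p, hp, rfl⟩
      have hw0 : w = 0 := Subsingleton.elim _ _
      simpa [LinearMap.comp_apply, hw0] using hw p hp
    · intro hx
      refine ⟨(x, 0), fun p hp => ?_, rfl⟩
      simpa [LinearMap.comp_apply] using hx _ ⟨p, hp, rfl⟩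
  | succ k ih =>
    intro s hs
    have h1 : IsHP ((splitE k : (V × (Fin (k + 1) → ℝ)) ≃ₗ[ℝ] _) '' s) :=
      hs.image_equiv _
    have h3 := ih h1.fm
    have heq : Prod.fst '' (Prod.fst '' ((splitE k) '' s)) = Prod.fst '' s := by
      ext v
      constructor
      · rintro ⟨w, ⟨u, ⟨z, hz, rfl⟩, rfl⟩, rfl⟩
        exact ⟨z, hz, rfl⟩
      · rintro ⟨z, hz, rfl⟩
        exact ⟨_, ⟨_, ⟨z, hz, rfl⟩, rfl⟩, rfl⟩
    rwa [heq] at h3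

lemma IsHP.image_linear {k q : ℕ} {T : Set (Fin k → ℝ)} (hT : IsHP T)
    (M : (Fin k → ℝ) →ₗ[ℝ] (Fin q → ℝ)) : IsHP (M '' T) := by
  obtain ⟨L, hL⟩ := hT
  set s : Set ((Fin q → ℝ) × (Fin k → ℝ)) := {z | z.2 ∈ T ∧ z.1 = M z.2} with hsdef
  have hs : IsHP s := by
    refine ⟨(L.map fun pr => (pr.1.comp (LinearMap.snd ℝ _ _), pr.2)) ++
      (((List.finRange q).map fun i =>
        ((LinearMap.proj i : ((Fin q → ℝ) →ₗ[ℝ] ℝ)).comp (LinearMap.fst ℝ _ _) -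
          ((LinearMap.proj i : ((Fin q → ℝ) →ₗ[ℝ] ℝ)).comp M).comp (LinearMap.snd ℝ _ _), (0 : ℝ))) ++
       ((List.finRange q).map fun i =>
        (((LinearMap.proj i : ((Fin q → ℝ) →ₗ[ℝ] ℝ)).comp M).comp (LinearMap.snd ℝ _ _) -
          (LinearMap.proj i : ((Fin q → ℝ) →ₗ[ℝ] ℝ)).comp (LinearMap.fst ℝ _ _), (0 : ℝ)))), ?_⟩
    ext z
    simp only [hsdef, Set.mem_setOf_eq, List.mem_append, List.mem_map]
    constructor
    · rintro ⟨hzT, hzM⟩ pr hpr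
      rcases hpr with ⟨p, hp, rfl⟩ | (⟨i, hi, rfl⟩ | ⟨i, hi, rfl⟩)
      · rw [hL] at hzT
        exact hzT p hp
      · simp [LinearMap.sub_apply, LinearMap.comp_apply, hzM]
      · simp [LinearMap.sub_apply, LinearMap.comp_apply, hzM]
    · intro hz
      constructor
      · rw [hL]
        intro p hp
        exact hz _ (Or.inl ⟨p, hp, rfl⟩)
      · funext i
        have h1 := hz _ (Or.inr (Or.inl ⟨i, List.mem_finRange i, rfl⟩))
        have h2 := hz _ (Or.inr (Or.inr ⟨i, List.mem_finRange i, rfl⟩))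
        simp only [LinearMap.sub_apply, LinearMap.comp_apply, LinearMap.proj_apply,
          LinearMap.fst_apply, LinearMap.snd_apply] at h1 h2
        linarith
  have h3 := hs.fst_image_pi
  have heq : Prod.fst '' s = M '' T := by
    ext y
    constructor
    · rintro ⟨z, ⟨hzT, hzM⟩, rfl⟩
      exact ⟨z.2, hzT, hzM.symm⟩
    · rintro ⟨lam, hlam, rfl⟩
      exact ⟨(M lam, lam), ⟨hlam, rfl⟩, rfl⟩
  rwa [heq] at h3

end Proj
section Cones

/-- Evaluate a linear functional on `Fin r → ℝ` via coordinates. -/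
lemma lin_eq_sum {r : ℕ} (g : (Fin r → ℝ) →ₗ[ℝ] ℝ) (x : Fin r → ℝ) :
    g x = ∑ i, x i * g (Pi.single i 1) := by
  conv_lhs => rw [← Finset.univ_sum_single x]
  rw [map_sum]
  refine Finset.sum_congr rfl fun i _ => ?_
  have : Pi.single i (x i) = x i • (Pi.single i (1 : ℝ) : Fin r → ℝ) := by
    funext j
    by_cases h : j = i <;> simp [Pi.single_apply, h]
  rw [this, LinearMap.map_smul, smul_eq_mul]

/-- A finitely generated cone is an H-cone: cut out by finitely many
homogeneous inequalities. -/
lemma cone_desc {q k : ℕ} (Y : Matrix (Fin q) (Fin k) ℝ) :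
    ∃ L : List ((Fin q → ℝ) →ₗ[ℝ] ℝ),
      {y | ∃ lam : Fin k → ℝ, 0 ≤ lam ∧ y = Y.mulVec lam} = {z | ∀ f ∈ L, 0 ≤ f z} := by
  set Cs : Set (Fin q → ℝ) := {y | ∃ lam : Fin k → ℝ, 0 ≤ lam ∧ y = Y.mulVec lam} with hCs
  have hO : IsHP {lam : Fin k → ℝ | 0 ≤ lam} := by
    refine ⟨(List.finRange k).map fun i => ((LinearMap.proj i : (Fin k → ℝ) →ₗ[ℝ] ℝ), 0), ?_⟩
    ext lam
    simp only [Set.mem_setOf_eq, List.mem_map, Pi.le_def]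
    constructor
    · rintro h pr ⟨i, hi, rfl⟩
      exact h i
    · intro h i
      exact h _ ⟨i, List.mem_finRange i, rfl⟩
  have himg := hO.image_linear Y.mulVecLin
  have hCimg : Cs = Y.mulVecLin '' {lam | 0 ≤ lam} := by
    ext y
    simp only [hCs, Set.mem_setOf_eq, Set.mem_image, Matrix.mulVecLin_apply]
    constructor
    · rintro ⟨lam, h1, h2⟩; exact ⟨lam, h1, h2.symm⟩
    · rintro ⟨lam, h1, h2⟩; exact ⟨lam, h1, h2.symm⟩
  rw [← hCimg] at himg
  obtain ⟨L, hL⟩ := himg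
  have h0C : (0 : Fin q → ℝ) ∈ Cs := ⟨0, le_refl _, by simp⟩
  have hc0 : ∀ pr ∈ L, pr.2 ≤ 0 := by
    intro pr hpr
    have := (hL ▸ h0C) pr hpr
    simpa using this
  have hsmulC : ∀ z ∈ Cs, ∀ t : ℝ, 0 ≤ t → t • z ∈ Cs := by
    rintro z ⟨lam, h1, rfl⟩ t ht
    exact ⟨t • lam, smul_nonneg ht h1, by rw [Matrix.mulVec_smul]⟩
  refine ⟨L.map Prod.fst, ?_⟩
  ext z
  simp only [Set.mem_setOf_eq, List.mem_map]
  constructor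
  · intro hz f hf
    obtain ⟨pr, hpr, rfl⟩ := hf
    by_contra hneg
    push_neg at hneg
    set t : ℝ := (pr.2 - 1) / pr.1 z with htdef
    have ht : 0 < t := div_pos_of_neg_of_neg (by linarith [hc0 pr hpr]) hneg
    have hmem : t • z ∈ Cs := hsmulC z hz t (le_of_lt ht)
    have := (hL ▸ hmem) pr hpr
    rw [LinearMap.map_smul, smul_eq_mul, htdef, div_mul_cancel₀ _ (ne_of_lt hneg)] at this
    linarith
  · intro hz
    rw [hL]
    intro pr hpr
    exact le_trans (hc0 pr hpr) (hz pr.1 ⟨pr, hpr, rfl⟩)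

/-- Farkas' lemma. -/
lemma farkas {m n : ℕ} (B : Matrix (Fin m) (Fin n) ℝ) (c : Fin n → ℝ)
    (h : ∀ d : Fin n → ℝ, 0 ≤ B.mulVec d → 0 ≤ c ⬝ᵥ d) :
    ∃ lam : Fin m → ℝ, 0 ≤ lam ∧ c = Bᵀ.mulVec lam := by
  obtain ⟨L, hL⟩ := cone_desc Bᵀ
  have hc : ∀ f ∈ L, 0 ≤ f c := by
    intro f hf
    by_contra hfc
    push_neg at hfc
    set d : Fin n → ℝ := fun i => f (Pi.single i 1) with hd
    have hrow : ∀ i : Fin m, (fun l => B i l) = Bᵀ.mulVec (Pi.single i 1) := by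
      intro i
      funext l
      simp [Matrix.mulVec, dotProduct, Pi.single_apply]
    have hBd : 0 ≤ B.mulVec d := by
      intro i
      show (0 : ℝ) ≤ (B.mulVec d) i
      have hmem : (fun l => B i l) ∈ {y | ∃ lam : Fin m → ℝ, 0 ≤ lam ∧ y = Bᵀ.mulVec lam} := by
        refine ⟨Pi.single i 1, ?_, hrow i⟩
        intro j
        by_cases hj : j = i <;> simp [Pi.single_apply, hj]
      have hfrow : 0 ≤ f (fun l => B i l) := (hL ▸ hmem) f hf
      have : f (fun l => B i l) = (B.mulVec d) i := by
        rw [lin_eq_sum]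
        simp [Matrix.mulVec, dotProduct, hd]
      rw [← this]
      exact hfrow
    have hcd : c ⬝ᵥ d = f c := by
      rw [lin_eq_sum]
      simp [dotProduct, hd]
    have := h d hBd
    rw [hcd] at this
    linarith
  have hcC : c ∈ {y | ∃ lam : Fin m → ℝ, 0 ≤ lam ∧ y = Bᵀ.mulVec lam} := by
    rw [hL]; exact hc
  obtain ⟨lam, h1, h2⟩ := hcC
  exact ⟨lam, h1, h2⟩

/-- If a nonneg functional on `C` vanishes at an interior point, it is zero. -/
lemma zero_of_interior {q : ℕ} {C : Set (Fin q → ℝ)} {e : Fin q → ℝ}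
    (he : e ∈ interior C) (f : (Fin q → ℝ) →ₗ[ℝ] ℝ) (hf : ∀ z ∈ C, 0 ≤ f z)
    (hfe : f e = 0) : ∀ v, f v = 0 := by
  intro v
  by_contra hv
  obtain ⟨ε, hε, hball⟩ := Metric.mem_nhds_iff.1 (mem_interior_iff_mem_nhds.1 he)
  set v' : Fin q → ℝ := if 0 < f v then v else -v with hv'
  have hfv' : 0 < f v' := by
    by_cases hcase : 0 < f v
    · rw [hv', if_pos hcase]; exact hcase
    · rw [hv', if_neg hcase, map_neg]
      push_neg at hcase
      rcases lt_or_eq_of_le hcase with h' | h'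
      · linarith
      · exact absurd h' hv
  set δ : ℝ := ε / (2 * (‖v'‖ + 1)) with hδdef
  have hden : (0 : ℝ) < 2 * (‖v'‖ + 1) := by positivity
  have hδ : 0 < δ := div_pos hε hden
  have hmem : e - δ • v' ∈ C := by
    apply hball
    rw [Metric.mem_ball, dist_eq_norm]
    have hsub : e - δ • v' - e = -(δ • v') := by abel
    rw [hsub, norm_neg, norm_smul, Real.norm_eq_abs, abs_of_pos hδ]
    have h1 : δ * (2 * (‖v'‖ + 1)) = ε := div_mul_cancel₀ _ (ne_of_gt hden)
    nlinarith [norm_nonneg v', hδ]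
  have h2 := hf _ hmem
  rw [map_sub, LinearMap.map_smul, hfe, smul_eq_mul] at h2
  nlinarith

lemma list_uniform {α : Type*} (L : List α) (R : ℝ → α → Prop)
    (h : ∀ a ∈ L, ∃ T₀ : ℝ, ∀ T, T₀ ≤ T → R T a) :
    ∃ T₀ : ℝ, ∀ T, T₀ ≤ T → ∀ a ∈ L, R T a := by
  induction L with
  | nil => exact ⟨0, by simp⟩
  | cons a L ih =>
    obtain ⟨T₁, h₁⟩ := h a (by simp)
    obtain ⟨T₂, h₂⟩ := ih fun x hx => h x (List.mem_cons_of_mem _ hx)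
    refine ⟨max T₁ T₂, fun T hT x hx => ?_⟩
    rcases List.mem_cons.1 hx with rfl | hx
    · exact h₁ T (le_trans (le_max_left _ _) hT)
    · exact h₂ T (le_trans (le_max_right _ _) hT) x hx

end Cones
/-- Problem (P) is bounded (P[S] ⊆ {y} + C for some y) iff the recession cone of the
upper image 𝒫 = P[S] + C equals C, provided S ≠ ∅ and C is a solid pointed
polyhedral cone. -/
theorem bounded_iff_recession_cone_eq_C
    (q n m p : ℕ)
    (B : Matrix (Fin m) (Fin n) ℝ) (b : Fin m → ℝ) (P : Matrix (Fin q) (Fin n) ℝ)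
    (Y : Matrix (Fin q) (Fin p) ℝ)
    (C : Set (Fin q → ℝ))
    (hC : C = {y | ∃ lam : Fin p → ℝ, 0 ≤ lam ∧ y = Y.mulVec lam})
    (hCpointed : ∀ x ∈ C, -x ∈ C → x = 0)
    (hCsolid : (interior C).Nonempty)
    (S : Set (Fin n → ℝ)) (hS : S = {x | b ≤ B.mulVec x}) (hSne : S.Nonempty)
    (UP : Set (Fin q → ℝ))
    (hUP : UP = {y | ∃ x ∈ S, ∃ k ∈ C, y = P.mulVec x + k})
    (UPrec : Set (Fin q → ℝ))
    (hUPrec : UPrec = {k | ∀ y ∈ UP, ∀ t : ℝ, 0 ≤ t → y + t • k ∈ UP}) :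
    (∃ y : Fin q → ℝ, ∀ x ∈ S, ∃ k ∈ C, P.mulVec x = y + k) ↔ UPrec = C := by
  have h0C : (0 : Fin q → ℝ) ∈ C := by rw [hC]; exact ⟨0, le_refl _, by simp⟩
  have haddC : ∀ a ∈ C, ∀ c ∈ C, a + c ∈ C := by
    rw [hC]
    rintro a ⟨la, hla, rfl⟩ c ⟨lc, hlc, rfl⟩
    refine ⟨la + lc, ?_, by rw [Matrix.mulVec_add]⟩
    intro i
    have h1 := hla i; have h2 := hlc i
    simp only [Pi.add_apply, Pi.zero_apply] at *
    linarith
  have hsmulC : ∀ a ∈ C, ∀ t : ℝ, 0 ≤ t → t • a ∈ C := by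
    rw [hC]
    rintro a ⟨la, hla, rfl⟩ t ht
    exact ⟨t • la, smul_nonneg ht hla, by rw [Matrix.mulVec_smul]⟩
  obtain ⟨LC, hLC⟩ := cone_desc Y
  have hCdesc : C = {z | ∀ f ∈ LC, 0 ≤ f z} := by rw [hC]; exact hLC
  have hCmem : ∀ z ∈ C, ∀ f ∈ LC, 0 ≤ f z := by
    intro z hz; rw [hCdesc] at hz; exact hz
  obtain ⟨x₀, hx₀⟩ := hSne
  constructor
  · rintro ⟨y, hy⟩
    apply Set.Subset.antisymm
    · -- UPrec ⊆ C
      intro k hk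
      rw [hUPrec] at hk
      have hy₁ : P.mulVec x₀ ∈ UP := by
        rw [hUP]; exact ⟨x₀, hx₀, 0, h0C, by simp⟩
      rw [hCdesc]
      intro f hf
      by_contra hneg
      push_neg at hneg
      set t : ℝ := max 0 ((f y - f (P.mulVec x₀) - 1) / f k) with htdef
      have ht0 : (0 : ℝ) ≤ t := le_max_left _ _
      have hmem := hk _ hy₁ t ht0
      rw [hUP] at hmem
      obtain ⟨x, hxS, k', hk', heq⟩ := hmem
      obtain ⟨c0, hc0, hPx⟩ := hy x hxS
      have hCsum : c0 + k' ∈ C := haddC _ hc0 _ hk'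
      have hfin : 0 ≤ f (c0 + k') := hCmem _ hCsum f hf
      have hval : f (c0 + k') = f (P.mulVec x₀) + t * f k - f y := by
        have hck : c0 + k' = P.mulVec x₀ + t • k - y := by
          rw [hPx] at heq
          have : P.mulVec x₀ + t • k = y + c0 + k' := by rw [heq]
          rw [this]; abel
        rw [hck, map_sub, map_add, LinearMap.map_smul, smul_eq_mul]
      have hge : (f y - f (P.mulVec x₀) - 1) / f k ≤ t := le_max_right _ _
      have hmul := mul_le_mul_of_nonpos_right hge (le_of_lt hneg)
      rw [div_mul_cancel₀ _ (ne_of_lt hneg)] at hmul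
      rw [hval] at hfin
      linarith
    · -- C ⊆ UPrec
      intro k hk
      rw [hUPrec]
      intro y' hy' t ht
      rw [hUP] at hy' ⊢
      obtain ⟨x, hxS, k', hk', rfl⟩ := hy'
      exact ⟨x, hxS, k' + t • k, haddC _ hk' _ (hsmulC _ hk _ ht), by rw [add_assoc]⟩
  · intro hrec
    have stepA : ∀ d : Fin n → ℝ, 0 ≤ B.mulVec d → P.mulVec d ∈ C := by
      intro d hd
      rw [← hrec, hUPrec]
      intro y' hy' t ht
      rw [hUP] at hy' ⊢
      obtain ⟨x, hxS, k', hk', rfl⟩ := hy'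
      refine ⟨x + t • d, ?_, k', hk', ?_⟩
      · rw [hS] at hxS ⊢
        intro i
        rw [Matrix.mulVec_add, Matrix.mulVec_smul]
        have h1 := hxS i
        have h2 := hd i
        simp only [Pi.add_apply, Pi.smul_apply, smul_eq_mul, Pi.zero_apply] at h1 h2 ⊢
        nlinarith [mul_nonneg ht h2]
      · rw [Matrix.mulVec_add, Matrix.mulVec_smul]
        module
    obtain ⟨e, he⟩ := hCsolid
    have heC : e ∈ C := interior_subset he
    have key : ∀ f ∈ LC, ∃ T₀ : ℝ, ∀ T, T₀ ≤ T → ∀ x ∈ S,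
        0 ≤ f (P.mulVec x) + T * f e := by
      intro f hf
      set cf : Fin n → ℝ := fun j => f (P.mulVec (Pi.single j 1)) with hcf
      have hcfdot : ∀ x, cf ⬝ᵥ x = f (P.mulVec x) := by
        intro x
        have hfx : f (P.mulVec x) = (f ∘ₗ P.mulVecLin) x := by
          simp [Matrix.mulVecLin_apply]
        rw [hfx, lin_eq_sum (f ∘ₗ P.mulVecLin) x]
        simp only [dotProduct, hcf, LinearMap.comp_apply, Matrix.mulVecLin_apply]
        exact Finset.sum_congr rfl fun i _ => mul_comm _ _
      have hfar : ∀ d, 0 ≤ B.mulVec d → 0 ≤ cf ⬝ᵥ d := by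
        intro d hd
        rw [hcfdot]
        exact hCmem _ (stepA d hd) f hf
      obtain ⟨lam, hlam, hclam⟩ := farkas B cf hfar
      have hlow : ∀ x ∈ S, lam ⬝ᵥ b ≤ f (P.mulVec x) := by
        intro x hxS
        rw [← hcfdot, hclam, Matrix.mulVec_transpose, ← Matrix.dotProduct_mulVec]
        rw [hS] at hxS
        refine Finset.sum_le_sum fun i _ => ?_
        exact mul_le_mul_of_nonneg_left (hxS i) (hlam i)
      have hfe : 0 ≤ f e := hCmem _ heC f hf
      rcases lt_or_eq_of_le hfe with hfe' | hfe'
      · refine ⟨(-(lam ⬝ᵥ b)) / f e, fun T hT x hxS => ?_⟩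
        have hmul := mul_le_mul_of_nonneg_right hT (le_of_lt hfe')
        rw [div_mul_cancel₀ _ (ne_of_gt hfe')] at hmul
        have := hlow x hxS
        linarith
      · have hzero : ∀ v, f v = 0 :=
          zero_of_interior he f (fun z hz => hCmem z hz f hf) hfe'.symm
        refine ⟨0, fun T hT x hxS => ?_⟩
        rw [hzero, hzero, mul_zero, add_zero]
    obtain ⟨T₀, hT₀⟩ := list_uniform LC _ key
    refine ⟨(-T₀) • e, fun x hxS => ?_⟩
    refine ⟨P.mulVec x + T₀ • e, ?_, by module⟩
    rw [hCdesc]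
    intro f hf
    have h1 := hT₀ T₀ (le_refl _) f hf x hxS
    rw [map_add, LinearMap.map_smul, smul_eq_mul]
    linarith
end
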